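/- arXiv:1608.06039 — 5 statements merged into one kernel-verified Lean document; each statement's English description precedes it below -/
import Mathlib

section
/- Every finite-dimensional representation of an A_n-type quiver over a field F is isomorphic to a direct sum of interval representations I[b;d] for various 1 ≤ b ≤ d ≤ n. -/
/-- A representation of an `A_{n+1}`-type quiver with vertices `0,…,n` and arrows
`i ↔ i+1` for `i : Fin n`, oriented forward when `orient i = true`. -/
structure ZigzagRep (F : Type) [Field F] (n : ℕ) (orient : Fin n → Bool) where
  V : Fin (n + 1) → Type
  addgrp : ∀ i, AddCommGroup (V i) := by infer_instance
  mod : ∀ i, Module F (V i) := by infer_instance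
  fwd : ∀ i : Fin n, orient i = true → (V i.castSucc →ₗ[F] V i.succ)
  bwd : ∀ i : Fin n, orient i = false → (V i.succ →ₗ[F] V i.castSucc)

attribute [instance] ZigzagRep.addgrp ZigzagRep.mod

variable {F : Type} [Field F] {n : ℕ} {orient : Fin n → Bool}

/-- Isomorphism of zigzag representations. -/
structure ZigzagRep.Iso (A B : ZigzagRep F n orient) where
  e : ∀ i, A.V i ≃ₗ[F] B.V i
  comm_fwd : ∀ (i : Fin n) (h : orient i = true) (x : A.V i.castSucc),
    e i.succ (A.fwd i h x) = B.fwd i h (e i.castSucc x)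
  comm_bwd : ∀ (i : Fin n) (h : orient i = false) (x : A.V i.succ),
    e i.castSucc (A.bwd i h x) = B.bwd i h (e i.succ x)

/-- The space at vertex `i` of the interval representation `I[b;d]`. -/
def intervalSp (F : Type) [Field F] (b d i : ℕ) : Submodule F F :=
  if b ≤ i ∧ i ≤ d then ⊤ else ⊥

open Classical in
/-- The interval representation `I[b;d]`. -/
noncomputable def intervalRep (F : Type) [Field F] (n : ℕ) (orient : Fin n → Bool)
    (b d : ℕ) : ZigzagRep F n orient where
  V i := ↥(intervalSp F b d i)
  fwd i _ :=
    if h : intervalSp F b d i ≤ intervalSp F b d (i + 1) then Submodule.inclusion h else 0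
  bwd i _ :=
    if h : intervalSp F b d (i + 1) ≤ intervalSp F b d i then Submodule.inclusion h else 0

/-- Direct sum of a family of zigzag representations. -/
noncomputable def ZigzagRep.dsum {ι : Type} [DecidableEq ι]
    (R : ι → ZigzagRep F n orient) : ZigzagRep F n orient where
  V i := Π₀ k, (R k).V i
  fwd i h := DFinsupp.mapRange.linearMap fun k => (R k).fwd i h
  bwd i h := DFinsupp.mapRange.linearMap fun k => (R k).bwd i h

/-- Binary direct sum of two zigzag representations. -/
def ZigzagRep.prod (A B : ZigzagRep F n orient) : ZigzagRep F n orient where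
  V i := A.V i × B.V i
  fwd i h := (A.fwd i h).prodMap (B.fwd i h)
  bwd i h := (A.bwd i h).prodMap (B.bwd i h)


section GabrielAux
variable (F : Type) [Field F]

open Classical in
noncomputable def ivG (S T : Submodule F F) : ↥S →ₗ[F] ↥T :=
  if h : S ≤ T then Submodule.inclusion h else 0

open Classical in
lemma ivG_val (S T : Submodule F F) (x : ↥S) :
    ((ivG F S T x : ↥T) : F) = if S ≤ T then (x : F) else 0 := by
  unfold ivG
  split_ifs with h
  · rfl
  · simp

lemma intervalSp_eq_top {b d i : ℕ} (h : b ≤ i ∧ i ≤ d) : intervalSp F b d i = ⊤ := if_pos h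
lemma intervalSp_eq_bot {b d i : ℕ} (h : ¬(b ≤ i ∧ i ≤ d)) : intervalSp F b d i = ⊥ := if_neg h

lemma intervalSp_val_eq_zero {b d i : ℕ} (h : ¬(b ≤ i ∧ i ≤ d)) (x : ↥(intervalSp F b d i)) :
    (x : F) = 0 := by
  obtain ⟨xv, hxv⟩ := x
  show xv = 0
  rw [intervalSp_eq_bot F h] at hxv
  simpa using hxv

lemma intervalSp_le_iff {b d i b' d' i' : ℕ} :
    intervalSp F b d i ≤ intervalSp F b' d' i' ↔ (¬(b ≤ i ∧ i ≤ d) ∨ (b' ≤ i' ∧ i' ≤ d')) := by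
  unfold intervalSp
  split_ifs with h1 h2 h2
  · simp [h1, h2]
  · simp only [top_le_iff]
    constructor
    · intro hh; exact absurd hh.symm (by simpa using (Submodule.bot_ne_top (M := F) (R := F)))
    · rintro (hc | hc) <;> [exact absurd h1 hc; exact absurd hc h2]
  · simp [h1, h2, bot_le]
  · simp [h1, h2, bot_le]

/-- `F ≃ intervalSp` when the vertex lies in the interval. -/
noncomputable def unitMap {b d i : ℕ} (h : b ≤ i ∧ i ≤ d) : F ≃ₗ[F] ↥(intervalSp F b d i) :=
  (Submodule.topEquiv (R := F) (M := F)).symm.trans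
    (LinearEquiv.ofEq ⊤ (intervalSp F b d i) (intervalSp_eq_top F h).symm)

@[simp] lemma unitMap_val {b d i : ℕ} (h : b ≤ i ∧ i ≤ d) (c : F) :
    ((unitMap F h c : ↥(intervalSp F b d i)) : F) = c := rfl

@[simp] lemma unitMap_symm_val {b d i : ℕ} (h : b ≤ i ∧ i ≤ d) (x : ↥(intervalSp F b d i)) :
    (unitMap F h).symm x = (x : F) := rfl

end GabrielAux

section TauSection
variable (o : ℕ → Bool)

def cntT (v : ℕ) : ℕ := ((Finset.range v).filter fun i => o i = true).card
def cntF (v : ℕ) : ℕ := ((Finset.range v).filter fun i => o i = false).card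

noncomputable def tau (v : ℕ) : ℤ :=
  if v = 0 then 0 else if o (v-1) then (cntT o v : ℤ) else -(cntF o v : ℤ)

lemma cntT_lt {u v : ℕ} (h : u < v) (hov : o (v-1) = true) : cntT o u < cntT o v := by
  have h1 : cntT o u ≤ cntT o (v-1) := by
    apply Finset.card_le_card
    apply Finset.filter_subset_filter
    exact Finset.range_subset_range.2 (by omega)
  have h2 : cntT o v = cntT o (v-1) + 1 := by
    unfold cntT
    have hv : v = (v-1) + 1 := by omega
    rw [hv, Finset.range_add_one]
    simp only [Finset.filter_insert]
    rw [if_pos (by simpa using hov)]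
    rw [Finset.card_insert_of_notMem (by simp)]
    congr 1
  omega

lemma cntF_lt {u v : ℕ} (h : u < v) (hov : o (v-1) = false) : cntF o u < cntF o v := by
  have h1 : cntF o u ≤ cntF o (v-1) := by
    apply Finset.card_le_card
    apply Finset.filter_subset_filter
    exact Finset.range_subset_range.2 (by omega)
  have h2 : cntF o v = cntF o (v-1) + 1 := by
    unfold cntF
    have hv : v = (v-1) + 1 := by omega
    rw [hv, Finset.range_add_one]
    simp only [Finset.filter_insert]
    rw [if_pos (by simpa using hov)]
    rw [Finset.card_insert_of_notMem (by simp)]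
    congr 1
  omega

lemma tau_lt_of_true {u v : ℕ} (h : u < v) (hov : o (v-1) = true) : tau o u < tau o v := by
  have hv : tau o v = (cntT o v : ℤ) := by
    unfold tau; rw [if_neg (by omega), if_pos hov]
  have hu : tau o u ≤ (cntT o u : ℤ) := by
    unfold tau
    split_ifs with h1 h2
    · positivity
    · exact le_refl _
    · have : (0:ℤ) ≤ (cntT o u : ℤ) := by positivity
      omega
  have := cntT_lt o h hov
  omega

lemma tau_lt_of_false {u v : ℕ} (h : u < v) (hov : o (v-1) = false) : tau o v < tau o u := by
  have hv : tau o v = -(cntF o v : ℤ) := by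
    unfold tau; rw [if_neg (by omega)]; rw [hov]; simp
  have hu : -(cntF o u : ℤ) ≤ tau o u := by
    have h3 : (0:ℤ) ≤ (cntT o u : ℤ) := Int.natCast_nonneg _
    have h4 : (0:ℤ) ≤ (cntF o u : ℤ) := Int.natCast_nonneg _
    unfold tau
    split_ifs with h1 h2
    · omega
    · omega
    · exact le_refl _
  have := cntF_lt o h hov
  omega

lemma s_of_tau_lt {u v : ℕ} (h : tau o u < tau o v) :
    (u < v ∧ o (v-1) = true) ∨ (v < u ∧ o (u-1) = false) := by
  rcases lt_trichotomy u v with hlt | rfl | hgt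
  · rcases Bool.eq_false_or_eq_true (o (v-1)) with hov | hov
    · exact Or.inl ⟨hlt, hov⟩
    · exact absurd (tau_lt_of_false o hlt hov) (by omega)
  · omega
  · rcases Bool.eq_false_or_eq_true (o (u-1)) with hou | hou
    · exact absurd (tau_lt_of_true o hgt hou) (by omega)
    · exact Or.inr ⟨hgt, hou⟩

end TauSection

section CoreComm
variable (F : Type) [Field F]

lemma core_fwd (o : ℕ → Bool) {v u e1 e2 i : ℕ} (he : e1 = e2)
    (hR : v = u ∨ tau o u < tau o v) (ho : o i = true)
    (x : ↥(intervalSp F v e1 i)) :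
    ivG F (intervalSp F v e1 (i+1)) (intervalSp F u e2 (i+1))
      (ivG F (intervalSp F v e1 i) (intervalSp F v e1 (i+1)) x)
    = ivG F (intervalSp F u e2 i) (intervalSp F u e2 (i+1))
      (ivG F (intervalSp F v e1 i) (intervalSp F u e2 i) x) := by
  subst he
  apply Subtype.ext
  by_cases hA : v ≤ i ∧ i ≤ e1
  · rw [ivG_val, ivG_val, ivG_val, ivG_val]
    simp only [intervalSp_le_iff]
    split_ifs
    all_goals first
      | rfl
      | (exfalso
         rcases hR with rfl | hlt
         · omega
         · rcases s_of_tau_lt o hlt with ⟨hs1, hs2⟩ | ⟨hs1, hs2⟩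
           · first
             | omega
             | (have huv : v - 1 = i := by omega
                rw [huv, ho] at hs2; simp at hs2)
           · first
             | omega
             | (have huv : u - 1 = i := by omega
                rw [huv, ho] at hs2; simp at hs2))
  · have hx : (x : F) = 0 := intervalSp_val_eq_zero F hA x
    rw [ivG_val, ivG_val, ivG_val, ivG_val, hx]
    simp

lemma core_bwd (o : ℕ → Bool) {v u e1 e2 i : ℕ} (he : e1 = e2)
    (hR : v = u ∨ tau o u < tau o v) (ho : o i = false)
    (x : ↥(intervalSp F v e1 (i+1))) :
    ivG F (intervalSp F v e1 i) (intervalSp F u e2 i)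
      (ivG F (intervalSp F v e1 (i+1)) (intervalSp F v e1 i) x)
    = ivG F (intervalSp F u e2 (i+1)) (intervalSp F u e2 i)
      (ivG F (intervalSp F v e1 (i+1)) (intervalSp F u e2 (i+1)) x) := by
  subst he
  apply Subtype.ext
  by_cases hA : v ≤ i+1 ∧ i+1 ≤ e1
  · rw [ivG_val, ivG_val, ivG_val, ivG_val]
    simp only [intervalSp_le_iff]
    split_ifs
    all_goals first
      | rfl
      | (exfalso
         rcases hR with rfl | hlt
         · omega
         · rcases s_of_tau_lt o hlt with ⟨hs1, hs2⟩ | ⟨hs1, hs2⟩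
           · first
             | omega
             | (have huv : v - 1 = i := by omega
                rw [huv, ho] at hs2; simp at hs2)
           · first
             | omega
             | (have huv : u - 1 = i := by omega
                rw [huv, ho] at hs2; simp at hs2))
  · have hx : (x : F) = 0 := intervalSp_val_eq_zero F hA x
    rw [ivG_val, ivG_val, ivG_val, ivG_val, hx]
    simp

end CoreComm

section PiLevel
variable (F : Type) [Field F] {N : ℕ}

noncomputable def ivmapPi (b d : Fin N → ℕ) (i j : ℕ) :
    (∀ k, ↥(intervalSp F (b k) (d k) i)) →ₗ[F] (∀ k, ↥(intervalSp F (b k) (d k) j)) :=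
  LinearMap.pi fun k => (ivG F _ _).comp (LinearMap.proj k)

lemma ivmapPi_apply (b d : Fin N → ℕ) (i j : ℕ) (x : ∀ k, ↥(intervalSp F (b k) (d k) i))
    (k : Fin N) :
    ivmapPi F b d i j x k
      = ivG F (intervalSp F (b k) (d k) i) (intervalSp F (b k) (d k) j) (x k) := rfl

noncomputable def eta (b d : Fin N → ℕ) (c : Fin N → Fin N → F) (i : ℕ) :
    (∀ k, ↥(intervalSp F (b k) (d k) i)) →ₗ[F] (∀ k, ↥(intervalSp F (b k) (d k) i)) :=
  ∑ k : Fin N, ∑ j : Fin N, c k j •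
    ((LinearMap.single F (fun k' => ↥(intervalSp F (b k') (d k') i)) j).comp
      ((ivG F (intervalSp F (b k) (d k) i) (intervalSp F (b j) (d j) i)).comp
        (LinearMap.proj k)))

lemma eta_apply (b d : Fin N → ℕ) (c : Fin N → Fin N → F) (i : ℕ)
    (x : ∀ k, ↥(intervalSp F (b k) (d k) i)) (j0 : Fin N) :
    eta F b d c i x j0
      = ∑ k : Fin N, c k j0 •
          ivG F (intervalSp F (b k) (d k) i) (intervalSp F (b j0) (d j0) i) (x k) := by
  unfold eta
  rw [LinearMap.sum_apply, Finset.sum_apply]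
  refine Finset.sum_congr rfl fun k _ => ?_
  rw [LinearMap.sum_apply, Finset.sum_apply]
  rw [Finset.sum_eq_single j0]
  · simp
  · intro j _ hne
    simp [Pi.single_eq_of_ne (Ne.symm hne)]
  · intro h
    exact absurd (Finset.mem_univ j0) h

lemma eta_sq (b d : Fin N → ℕ) (c : Fin N → Fin N → F) (i : ℕ)
    (Hc : ∀ k j, c k j ≠ 0 → ∀ j', c j j' = 0)
    (x : ∀ k, ↥(intervalSp F (b k) (d k) i)) :
    eta F b d c i (eta F b d c i x) = 0 := by
  funext j0
  rw [eta_apply]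
  apply Finset.sum_eq_zero
  intro k _
  by_cases hc : c k j0 = 0
  · simp [hc]
  · have hzero : eta F b d c i x k = 0 := by
      rw [eta_apply]
      apply Finset.sum_eq_zero
      intro k' _
      by_cases hck' : c k' k = 0
      · simp [hck']
      · exact absurd (Hc k' k hck' j0) hc
    simp [hzero]

noncomputable def psiE (b d : Fin N → ℕ) (c : Fin N → Fin N → F) (i : ℕ)
    (Hc : ∀ k j, c k j ≠ 0 → ∀ j', c j j' = 0) :
    (∀ k, ↥(intervalSp F (b k) (d k) i)) ≃ₗ[F] (∀ k, ↥(intervalSp F (b k) (d k) i)) :=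
  LinearEquiv.ofLinear (LinearMap.id + eta F b d c i) (LinearMap.id - eta F b d c i)
    (by
      apply LinearMap.ext; intro x
      have h2 := eta_sq F b d c i Hc x
      simp only [LinearMap.comp_apply, LinearMap.add_apply, LinearMap.sub_apply,
        LinearMap.id_apply, map_sub, h2]
      abel)
    (by
      apply LinearMap.ext; intro x
      have h2 := eta_sq F b d c i Hc x
      simp only [LinearMap.comp_apply, LinearMap.add_apply, LinearMap.sub_apply,
        LinearMap.id_apply, map_add, h2]
      abel)

lemma psiE_apply (b d : Fin N → ℕ) (c : Fin N → Fin N → F) (i : ℕ) (Hc)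
    (x : ∀ k, ↥(intervalSp F (b k) (d k) i)) :
    psiE F b d c i Hc x = x + eta F b d c i x := rfl

lemma psiE_symm_apply (b d : Fin N → ℕ) (c : Fin N → Fin N → F) (i : ℕ) (Hc)
    (x : ∀ k, ↥(intervalSp F (b k) (d k) i)) :
    (psiE F b d c i Hc).symm x = x - eta F b d c i x := rfl

lemma eta_comm_fwd (o : ℕ → Bool) (b d : Fin N → ℕ) (c : Fin N → Fin N → F) (i : ℕ)
    (Hr : ∀ k j, c k j ≠ 0 → (b k = b j ∨ tau o (b j) < tau o (b k)) ∧ d k = d j)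
    (ho : o i = true) (x : ∀ k, ↥(intervalSp F (b k) (d k) i)) :
    ivmapPi F b d i (i+1) (eta F b d c i x)
      = eta F b d c (i+1) (ivmapPi F b d i (i+1) x) := by
  funext j0
  rw [ivmapPi_apply, eta_apply, map_sum, eta_apply]
  refine Finset.sum_congr rfl fun k _ => ?_
  rw [map_smul]
  by_cases hc : c k j0 = 0
  · simp [hc]
  · obtain ⟨hR, he⟩ := Hr k j0 hc
    rw [ivmapPi_apply]
    exact congrArg (c k j0 • ·) (core_fwd F o he hR ho (x k)).symm

lemma eta_comm_bwd (o : ℕ → Bool) (b d : Fin N → ℕ) (c : Fin N → Fin N → F) (i : ℕ)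
    (Hr : ∀ k j, c k j ≠ 0 → (b k = b j ∨ tau o (b j) < tau o (b k)) ∧ d k = d j)
    (ho : o i = false) (x : ∀ k, ↥(intervalSp F (b k) (d k) (i+1))) :
    ivmapPi F b d (i+1) i (eta F b d c (i+1) x)
      = eta F b d c i (ivmapPi F b d (i+1) i x) := by
  funext j0
  rw [ivmapPi_apply, eta_apply, map_sum, eta_apply]
  refine Finset.sum_congr rfl fun k _ => ?_
  rw [map_smul]
  by_cases hc : c k j0 = 0
  · simp [hc]
  · obtain ⟨hR, he⟩ := Hr k j0 hc
    rw [ivmapPi_apply]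
    exact congrArg (c k j0 • ·) (core_bwd F o he hR ho (x k)).symm

lemma val_zero_of_bot {S : Submodule F F} (hS : S = ⊥) (x : ↥S) : (x : F) = 0 := by
  obtain ⟨xv, hxv⟩ := x
  show xv = 0
  rw [hS] at hxv
  simpa using hxv

def newb (q m : ℕ) (b : Fin N → ℕ) (k : Fin (N+q)) : ℕ :=
  if h : (k:ℕ) < N then b ⟨(k:ℕ),h⟩ else m+1

def newd (q m : ℕ) (d : Fin N → ℕ) (P : Finset (Fin N)) (k : Fin (N+q)) : ℕ :=
  if h : (k:ℕ) < N then (if (⟨(k:ℕ),h⟩ : Fin N) ∈ P then m+1 else d ⟨(k:ℕ),h⟩) else m+1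

lemma newsp_eq (q m : ℕ) (b d : Fin N → ℕ) (P : Finset (Fin N))
    (hP : ∀ k ∈ P, d k = m) (i : ℕ) (hi : i ≤ m) (k : Fin (N+q)) (h : (k:ℕ) < N) :
    intervalSp F (newb q m b k) (newd q m d P k) i
      = intervalSp F (b ⟨(k:ℕ),h⟩) (d ⟨(k:ℕ),h⟩) i := by
  unfold newb newd
  rw [dif_pos h, dif_pos h]
  by_cases hp : (⟨(k:ℕ),h⟩ : Fin N) ∈ P
  · rw [if_pos hp]
    unfold intervalSp
    refine if_congr ?_ rfl rfl
    rw [hP _ hp]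
    constructor <;> (rintro ⟨h1, h2⟩; exact ⟨h1, by omega⟩)
  · rw [if_neg hp]

lemma newsp_bot (q m : ℕ) (b d : Fin N → ℕ) (P : Finset (Fin N))
    (i : ℕ) (hi : i ≤ m) (k : Fin (N+q)) (h : ¬(k:ℕ) < N) :
    intervalSp F (newb q m b k) (newd q m d P k) i = ⊥ := by
  have hb : newb q m b k = m+1 := dif_neg h
  rw [hb]
  exact intervalSp_eq_bot F (by omega)

lemma newsp_bot_nonP (q m : ℕ) (b d : Fin N → ℕ) (P : Finset (Fin N))
    (hbd : ∀ k, b k ≤ d k ∧ d k ≤ m) (k : Fin (N+q)) (h : (k:ℕ) < N)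
    (hp : (⟨(k:ℕ),h⟩ : Fin N) ∉ P) :
    intervalSp F (newb q m b k) (newd q m d P k) (m+1) = ⊥ := by
  have hb : newb q m b k = b ⟨(k:ℕ),h⟩ := dif_pos h
  have hd : newd q m d P k = d ⟨(k:ℕ),h⟩ := by
    unfold newd; rw [dif_pos h, if_neg hp]
  rw [hb, hd]
  exact intervalSp_eq_bot F (by have := (hbd ⟨(k:ℕ),h⟩).2; omega)

lemma newsp_cond_mem (q m : ℕ) (b d : Fin N → ℕ) (P : Finset (Fin N))
    (hbd : ∀ k, b k ≤ d k ∧ d k ≤ m) (k : Fin (N+q)) (h : (k:ℕ) < N)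
    (hp : (⟨(k:ℕ),h⟩ : Fin N) ∈ P) :
    newb q m b k ≤ m+1 ∧ m+1 ≤ newd q m d P k := by
  unfold newb newd
  rw [dif_pos h, dif_pos h, if_pos hp]
  exact ⟨by have h1 := (hbd ⟨(k:ℕ),h⟩).1; have h2 := (hbd ⟨(k:ℕ),h⟩).2; omega, le_refl _⟩

lemma newsp_cond_new (q m : ℕ) (b d : Fin N → ℕ) (P : Finset (Fin N))
    (k : Fin (N+q)) (h : ¬(k:ℕ) < N) :
    newb q m b k ≤ m+1 ∧ m+1 ≤ newd q m d P k := by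
  unfold newb newd
  rw [dif_neg h, dif_neg h]
  exact ⟨le_refl _, le_refl _⟩

lemma ofEq_val {S T : Submodule F F} (h : S = T) (x : ↥S) :
    ((LinearEquiv.ofEq S T h x : ↥T) : F) = (x : F) := rfl

noncomputable def chiA (q m : ℕ) (b d : Fin N → ℕ) (P : Finset (Fin N))
    (hP : ∀ k ∈ P, d k = m) (i : ℕ) (hi : i ≤ m) :
    (∀ k : Fin N, ↥(intervalSp F (b k) (d k) i))
      →ₗ[F] (∀ k : Fin (N+q), ↥(intervalSp F (newb q m b k) (newd q m d P k) i)) :=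
  LinearMap.pi fun k => if h : (k:ℕ) < N then
      (LinearEquiv.ofEq _ _ (newsp_eq F q m b d P hP i hi k h).symm).toLinearMap.comp
        (LinearMap.proj (⟨(k:ℕ),h⟩ : Fin N))
    else 0

noncomputable def chiB (q m : ℕ) (b d : Fin N → ℕ) (P : Finset (Fin N))
    (hP : ∀ k ∈ P, d k = m) (i : ℕ) (hi : i ≤ m) :
    (∀ k : Fin (N+q), ↥(intervalSp F (newb q m b k) (newd q m d P k) i))
      →ₗ[F] (∀ k : Fin N, ↥(intervalSp F (b k) (d k) i)) :=
  LinearMap.pi fun k : Fin N =>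
    (LinearEquiv.ofEq _ _
      (newsp_eq F q m b d P hP i hi (Fin.castAdd q k) (by simpa using k.isLt))).toLinearMap.comp
      (LinearMap.proj (Fin.castAdd q k))

lemma chiA_val (q m : ℕ) (b d : Fin N → ℕ) (P : Finset (Fin N))
    (hP : ∀ k ∈ P, d k = m) (i : ℕ) (hi : i ≤ m)
    (x : ∀ k : Fin N, ↥(intervalSp F (b k) (d k) i)) (k : Fin (N+q)) :
    ((chiA F q m b d P hP i hi x k) : F)
      = if h : (k:ℕ) < N then ((x ⟨(k:ℕ),h⟩) : F) else 0 := by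
  unfold chiA
  rw [LinearMap.pi_apply]
  by_cases h : (k:ℕ) < N
  · rw [dif_pos h, dif_pos h]; rfl
  · rw [dif_neg h, dif_neg h]; rfl

lemma chiB_val (q m : ℕ) (b d : Fin N → ℕ) (P : Finset (Fin N))
    (hP : ∀ k ∈ P, d k = m) (i : ℕ) (hi : i ≤ m)
    (x : ∀ k : Fin (N+q), ↥(intervalSp F (newb q m b k) (newd q m d P k) i)) (k : Fin N) :
    ((chiB F q m b d P hP i hi x k) : F) = ((x (Fin.castAdd q k)) : F) := rfl

noncomputable def chi (q m : ℕ) (b d : Fin N → ℕ) (P : Finset (Fin N))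
    (hP : ∀ k ∈ P, d k = m) (i : ℕ) (hi : i ≤ m) :
    (∀ k : Fin N, ↥(intervalSp F (b k) (d k) i))
      ≃ₗ[F] (∀ k : Fin (N+q), ↥(intervalSp F (newb q m b k) (newd q m d P k) i)) :=
  LinearEquiv.ofLinear (chiA F q m b d P hP i hi) (chiB F q m b d P hP i hi)
    (by
      apply LinearMap.ext; intro x
      funext k
      apply Subtype.ext
      rw [LinearMap.comp_apply, LinearMap.id_apply, chiA_val]
      by_cases h : (k:ℕ) < N
      · rw [dif_pos h]
        rw [chiB_val]
        rfl
      · rw [dif_neg h]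
        exact (val_zero_of_bot F (newsp_bot F q m b d P i hi k h) (x k)).symm)
    (by
      apply LinearMap.ext; intro x
      funext k
      apply Subtype.ext
      rw [LinearMap.comp_apply, LinearMap.id_apply, chiB_val, chiA_val]
      rw [dif_pos (show ((Fin.castAdd q k : Fin (N+q)):ℕ) < N by simpa using k.isLt)]
      rfl)

lemma chi_val (q m : ℕ) (b d : Fin N → ℕ) (P : Finset (Fin N))
    (hP : ∀ k ∈ P, d k = m) (i : ℕ) (hi : i ≤ m)
    (x : ∀ k : Fin N, ↥(intervalSp F (b k) (d k) i)) (k : Fin (N+q)) :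
    ((chi F q m b d P hP i hi x k) : F)
      = if h : (k:ℕ) < N then ((x ⟨(k:ℕ),h⟩) : F) else 0 :=
  chiA_val F q m b d P hP i hi x k

lemma chi_comm (q m : ℕ) (b d : Fin N → ℕ) (P : Finset (Fin N))
    (hP : ∀ k ∈ P, d k = m) (i j : ℕ) (hi : i ≤ m) (hj : j ≤ m)
    (x : ∀ k : Fin N, ↥(intervalSp F (b k) (d k) i)) :
    ivmapPi F (newb q m b) (newd q m d P) i j (chi F q m b d P hP i hi x)
      = chi F q m b d P hP j hj (ivmapPi F b d i j x) := by
  funext k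
  apply Subtype.ext
  rw [ivmapPi_apply, ivG_val, chi_val, chi_val]
  by_cases h : (k:ℕ) < N
  · rw [dif_pos h, dif_pos h]
    rw [ivmapPi_apply, ivG_val]
    rw [newsp_eq F q m b d P hP i hi k h, newsp_eq F q m b d P hP j hj k h]
  · rw [dif_neg h, dif_neg h]
    simp

noncomputable def phiA (q m : ℕ) (b d : Fin N → ℕ) (P : Finset (Fin N))
    (hbd : ∀ k, b k ≤ d k ∧ d k ≤ m) :
    (({ x // x ∈ P } → F) × (Fin q → F))
      →ₗ[F] (∀ k : Fin (N+q), ↥(intervalSp F (newb q m b k) (newd q m d P k) (m+1))) :=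
  LinearMap.pi fun k =>
    if h : (k:ℕ) < N then
      (if hp : (⟨(k:ℕ),h⟩ : Fin N) ∈ P then
        (unitMap F (newsp_cond_mem q m b d P hbd k h hp)).toLinearMap.comp
          ((LinearMap.proj (⟨⟨(k:ℕ),h⟩,hp⟩ : { x // x ∈ P })).comp
            (LinearMap.fst F _ _))
      else 0)
    else
      (unitMap F (newsp_cond_new q m b d P k h)).toLinearMap.comp
        ((LinearMap.proj (⟨(k:ℕ) - N, by omega⟩ : Fin q)).comp (LinearMap.snd F _ _))

lemma phiA_val (q m : ℕ) (b d : Fin N → ℕ) (P : Finset (Fin N))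
    (hbd : ∀ k, b k ≤ d k ∧ d k ≤ m) (z : ({ x // x ∈ P } → F) × (Fin q → F))
    (k : Fin (N+q)) :
    ((phiA F q m b d P hbd z k) : F)
      = if h : (k:ℕ) < N then
          (if hp : (⟨(k:ℕ),h⟩ : Fin N) ∈ P then z.1 ⟨⟨(k:ℕ),h⟩,hp⟩ else 0)
        else z.2 ⟨(k:ℕ) - N, by omega⟩ := by
  unfold phiA
  rw [LinearMap.pi_apply]
  by_cases h : (k:ℕ) < N
  · rw [dif_pos h, dif_pos h]
    by_cases hp : (⟨(k:ℕ),h⟩ : Fin N) ∈ P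
    · rw [dif_pos hp, dif_pos hp]; rfl
    · rw [dif_neg hp, dif_neg hp]; rfl
  · rw [dif_neg h, dif_neg h]; rfl

noncomputable def phiB (q m : ℕ) (b d : Fin N → ℕ) (P : Finset (Fin N))
    (hbd : ∀ k, b k ≤ d k ∧ d k ≤ m) :
    (∀ k : Fin (N+q), ↥(intervalSp F (newb q m b k) (newd q m d P k) (m+1)))
      →ₗ[F] (({ x // x ∈ P } → F) × (Fin q → F)) :=
  LinearMap.prod
    (LinearMap.pi fun p : { x // x ∈ P } =>
      ((unitMap F (newsp_cond_mem q m b d P hbd (Fin.castAdd q p.val)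
          (by simpa using p.val.isLt) (by simpa using p.2))).symm.toLinearMap).comp
        (LinearMap.proj (Fin.castAdd q p.val)))
    (LinearMap.pi fun j : Fin q =>
      ((unitMap F (newsp_cond_new q m b d P (Fin.natAdd N j) (by simp))).symm.toLinearMap).comp
        (LinearMap.proj (Fin.natAdd N j)))

lemma phiB_fst (q m : ℕ) (b d : Fin N → ℕ) (P : Finset (Fin N))
    (hbd : ∀ k, b k ≤ d k ∧ d k ≤ m)
    (x : ∀ k : Fin (N+q), ↥(intervalSp F (newb q m b k) (newd q m d P k) (m+1)))
    (p : { x // x ∈ P }) :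
    (phiB F q m b d P hbd x).1 p = ((x (Fin.castAdd q p.val)) : F) := rfl

lemma phiB_snd (q m : ℕ) (b d : Fin N → ℕ) (P : Finset (Fin N))
    (hbd : ∀ k, b k ≤ d k ∧ d k ≤ m)
    (x : ∀ k : Fin (N+q), ↥(intervalSp F (newb q m b k) (newd q m d P k) (m+1)))
    (j : Fin q) :
    (phiB F q m b d P hbd x).2 j = ((x (Fin.natAdd N j)) : F) := rfl

noncomputable def phiE (q m : ℕ) (b d : Fin N → ℕ) (P : Finset (Fin N))
    (hP : ∀ k ∈ P, d k = m) (hbd : ∀ k, b k ≤ d k ∧ d k ≤ m) :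
    (({ x // x ∈ P } → F) × (Fin q → F))
      ≃ₗ[F] (∀ k : Fin (N+q), ↥(intervalSp F (newb q m b k) (newd q m d P k) (m+1))) :=
  LinearEquiv.ofLinear (phiA F q m b d P hbd) (phiB F q m b d P hbd)
    (by
      apply LinearMap.ext; intro x
      funext k
      apply Subtype.ext
      rw [LinearMap.comp_apply, LinearMap.id_apply, phiA_val]
      by_cases h : (k:ℕ) < N
      · rw [dif_pos h]
        by_cases hp : (⟨(k:ℕ),h⟩ : Fin N) ∈ P
        · rw [dif_pos hp, phiB_fst]
          rfl
        · rw [dif_neg hp]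
          exact (val_zero_of_bot F (newsp_bot_nonP F q m b d P hbd k h hp) (x k)).symm
      · rw [dif_neg h, phiB_snd]
        have hk : Fin.natAdd N (⟨(k:ℕ) - N, by omega⟩ : Fin q) = k := by
          apply Fin.ext
          simp
          omega
        rw [hk])
    (by
      apply LinearMap.ext; intro z
      apply Prod.ext
      · funext p
        have h1 : ((Fin.castAdd q p.val : Fin (N+q)) : ℕ) < N := by simpa using p.val.isLt
        rw [LinearMap.comp_apply, LinearMap.id_apply]
        have := phiB_fst F q m b d P hbd (phiA F q m b d P hbd z) p
        rw [this, phiA_val, dif_pos h1]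
        rw [dif_pos (show (⟨((Fin.castAdd q p.val : Fin (N+q)) : ℕ), h1⟩ : Fin N) ∈ P from p.2)]
        rfl
      · funext j
        rw [LinearMap.comp_apply, LinearMap.id_apply]
        have := phiB_snd F q m b d P hbd (phiA F q m b d P hbd z) j
        rw [this, phiA_val, dif_neg (show ¬((Fin.natAdd N j : Fin (N+q)) : ℕ) < N by simp)]
        have hj : (⟨((Fin.natAdd N j : Fin (N+q)) : ℕ) - N, by simp⟩ : Fin q) = j := by
          apply Fin.ext
          simp
        rw [hj])

lemma phiE_val (q m : ℕ) (b d : Fin N → ℕ) (P : Finset (Fin N))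
    (hP : ∀ k ∈ P, d k = m) (hbd : ∀ k, b k ≤ d k ∧ d k ≤ m)
    (z : ({ x // x ∈ P } → F) × (Fin q → F)) (k : Fin (N+q)) :
    ((phiE F q m b d P hP hbd z k) : F)
      = if h : (k:ℕ) < N then
          (if hp : (⟨(k:ℕ),h⟩ : Fin N) ∈ P then z.1 ⟨⟨(k:ℕ),h⟩,hp⟩ else 0)
        else z.2 ⟨(k:ℕ) - N, by omega⟩ :=
  phiA_val F q m b d P hbd z k

end PiLevel

section Reduction
variable {F : Type} [Field F]

lemma reduction {W : Type} [AddCommGroup W] [Module F W] {ι : Type} [Fintype ι] [DecidableEq ι]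
    (w : ι → W) (ω : ι → ℤ) (hω : Function.Injective ω) :
    ∃ (P : Finset ι) (c : ι → ι → F),
      (∀ k j, c k j ≠ 0 → j ∈ P ∧ ω j < ω k) ∧
      (∀ k ∉ P, w k = ∑ j, c k j • w j) ∧
      (LinearIndependent F fun p : { x // x ∈ P } => w ↑p) ∧
      (∀ k ∈ P, ∀ j, c k j = 0) ∧
      (∀ k, w k = 0 → ∀ j, c k j = 0) ∧
      (∀ k ∈ P, w k ≠ 0) := by
  classical
  set P : Finset ι :=
    Finset.univ.filter (fun k => w k ∉ Submodule.span F (w '' {j | ω j < ω k})) with hP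
  have hmemP : ∀ k, k ∈ P ↔ w k ∉ Submodule.span F (w '' {j | ω j < ω k}) := by
    intro k; simp [hP]
  -- claim A
  have claimA : ∀ (s : ℕ) (k : ι), (Finset.univ.filter (fun j => ω j < ω k)).card ≤ s →
      w k ∈ Submodule.span F (w '' {j | j ∈ P ∧ ω j ≤ ω k}) := by
    intro s
    induction s with
    | zero =>
      intro k hk
      by_cases hkP : k ∈ P
      · exact Submodule.subset_span ⟨k, ⟨hkP, le_refl _⟩, rfl⟩
      · rw [hmemP, not_not] at hkP
        have hempty : {j | ω j < ω k} = (∅ : Set ι) := by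
          ext j
          simp only [Set.mem_setOf_eq, Set.mem_empty_iff_false, iff_false, not_lt]
          by_contra hc
          push_neg at hc
          have : j ∈ Finset.univ.filter (fun j => ω j < ω k) := by
            simp [hc]
          have := Finset.card_pos.2 ⟨j, this⟩
          omega
        rw [hempty] at hkP
        simp only [Set.image_empty, Submodule.span_empty, Submodule.mem_bot] at hkP
        rw [hkP]
        exact Submodule.zero_mem _
    | succ s ih =>
      intro k hk
      by_cases hkP : k ∈ P
      · exact Submodule.subset_span ⟨k, ⟨hkP, le_refl _⟩, rfl⟩
      · rw [hmemP, not_not] at hkP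
        refine Submodule.span_le.2 ?_ hkP
        rintro _ ⟨j, hj, rfl⟩
        have hj' : ω j < ω k := hj
        have hcard : (Finset.univ.filter (fun i => ω i < ω j)).card ≤ s := by
          have hsub : (Finset.univ.filter (fun i => ω i < ω j))
              ⊆ (Finset.univ.filter (fun i => ω i < ω k)) := by
            intro i hi
            simp only [Finset.mem_filter, Finset.mem_univ, true_and] at hi ⊢
            omega
          have hmem : j ∈ (Finset.univ.filter (fun i => ω i < ω k)) := by simp [hj']
          have hnot : j ∉ (Finset.univ.filter (fun i => ω i < ω j)) := by simp
          have : (Finset.univ.filter (fun i => ω i < ω j))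
              ⊂ (Finset.univ.filter (fun i => ω i < ω k)) :=
            Finset.ssubset_iff_of_subset hsub |>.2 ⟨j, hmem, hnot⟩
          have := Finset.card_lt_card this
          omega
        have := ih j hcard
        refine Submodule.span_mono ?_ this
        apply Set.image_mono
        intro i hi
        exact ⟨hi.1, le_trans hi.2 (le_of_lt hj')⟩
  have claimA' : ∀ k, w k ∈ Submodule.span F (w '' {j | j ∈ P ∧ ω j ≤ ω k}) :=
    fun k => claimA _ k (le_refl _)
  -- coefficients
  have hcoef : ∀ k, k ∉ P → w k ≠ 0 → ∃ cc : ι → F,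
      (∀ j, cc j ≠ 0 → j ∈ P ∧ ω j < ω k) ∧ w k = ∑ j, cc j • w j := by
    intro k hkP hwk
    have := claimA' k
    rw [Finsupp.mem_span_image_iff_linearCombination] at this
    obtain ⟨l, hl, hlw⟩ := this
    refine ⟨fun j => l j, ?_, ?_⟩
    · intro j hj
      have hjsupp : j ∈ l.support := Finsupp.mem_support_iff.2 hj
      have hjspec := hl hjsupp
      refine ⟨hjspec.1, lt_of_le_of_ne hjspec.2 ?_⟩
      intro heq
      have : j = k := hω heq
      subst this
      exact hkP hjspec.1
    · rw [← hlw]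
      rw [Finsupp.linearCombination_apply, Finsupp.sum_fintype]
      simp
  choose cc hcc1 hcc2 using hcoef
  classical
  refine ⟨P, fun k => if hk : k ∈ P then 0 else if hw : w k = 0 then 0 else cc k hk hw,
    ?_, ?_, ?_, ?_, ?_, ?_⟩
  · intro k j hcj
    by_cases hk : k ∈ P
    · simp [hk] at hcj
    · by_cases hw : w k = 0
      · simp [hk, hw] at hcj
      · simp only [dif_neg hk, dif_neg hw] at hcj
        exact hcc1 k hk hw j hcj
  · intro k hk
    by_cases hw : w k = 0
    · simp [hk, hw]
    · simp only [dif_neg hk, dif_neg hw]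
      exact hcc2 k hk hw
  · -- linear independence
    rw [linearIndependent_iff'']
    intro s g hg hsum p
    by_contra hgp
    set t := s.filter (fun q => g q ≠ 0) with ht
    have hpt : p ∈ t := by
      by_cases hps : p ∈ s
      · simp [ht, hps, hgp]
      · exact absurd (hg p hps) hgp
    obtain ⟨pm, hpm, hmax⟩ := Finset.exists_max_image t (fun q => ω ↑q) ⟨p, hpt⟩
    have hgpm : g pm ≠ 0 := (Finset.mem_filter.1 hpm).2
    have hpms : pm ∈ s := (Finset.mem_filter.1 hpm).1
    have hrest : ∀ i ∈ s.erase pm, g i • w ↑i ∈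
        Submodule.span F (w '' {j | ω j < ω ↑pm}) := by
      intro i hi
      by_cases hgi : g i = 0
      · rw [hgi, zero_smul]; exact Submodule.zero_mem _
      · have hit : i ∈ t := by
          simp [ht, Finset.mem_of_mem_erase hi, hgi]
        have hle := hmax i hit
        have hne : ω ↑i ≠ ω ↑pm := by
          intro heq
          have : (↑i : ι) = ↑pm := hω heq
          exact (Finset.ne_of_mem_erase hi) (Subtype.ext this)
        refine Submodule.smul_mem _ _ (Submodule.subset_span ⟨↑i, ?_, rfl⟩)
        exact lt_of_le_of_ne hle hne
    have hpm_span : w ↑pm ∈ Submodule.span F (w '' {j | ω j < ω ↑pm}) := by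
      have hsum' : g pm • w ↑pm + ∑ i ∈ s.erase pm, g i • w ↑i = 0 := by
        rw [← hsum]
        exact Finset.add_sum_erase s (fun i => g i • w ↑i) hpms
      have h0 : g pm • w ↑pm = -∑ i ∈ s.erase pm, g i • w ↑i := by
        rw [eq_neg_iff_add_eq_zero]
        exact hsum'
      have hw : w ↑pm = (-(g pm)⁻¹) • ∑ i ∈ s.erase pm, g i • w ↑i := by
        calc w ↑pm = (g pm)⁻¹ • (g pm • w ↑pm) := (inv_smul_smul₀ hgpm _).symm
          _ = (g pm)⁻¹ • (-∑ i ∈ s.erase pm, g i • w ↑i) := by rw [h0]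
          _ = (-(g pm)⁻¹) • ∑ i ∈ s.erase pm, g i • w ↑i := by rw [smul_neg, neg_smul]
      rw [hw]
      exact Submodule.smul_mem _ _ (Submodule.sum_mem _ hrest)
    have := (hmemP ↑pm).1 pm.2
    exact this hpm_span
  · intro k hk j
    simp [hk]
  · intro k hw j
    by_cases hk : k ∈ P
    · simp [hk]
    · simp [hk, hw]
  · intro k hk
    have := (hmemP k).1 hk
    intro hw
    rw [hw] at this
    exact this (Submodule.zero_mem _)

lemma surj_of_indep {W : Type} [AddCommGroup W] [Module F W]
    {ι : Type} [Fintype ι] [DecidableEq ι] (f : ι → (W →ₗ[F] F))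
    (hf : LinearIndependent F f) :
    Function.Surjective (LinearMap.pi f : W →ₗ[F] (ι → F)) := by
  rw [← LinearMap.range_eq_top]
  by_contra hlt
  obtain ⟨φ, hφ0, hφ⟩ := Submodule.exists_dual_map_eq_bot_of_lt_top
    (lt_top_iff_ne_top.2 hlt) inferInstance
  have hker : ∀ x : W, φ (LinearMap.pi f x) = 0 := by
    intro x
    have : φ (LinearMap.pi f x) ∈ Submodule.map φ (LinearMap.range (LinearMap.pi f)) :=
      Submodule.mem_map_of_mem ⟨x, rfl⟩
    rw [hφ] at this
    simpa using this
  have hcomb : ∀ x : W, ∑ i : ι, φ (Pi.single i 1) • (f i x) = 0 := by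
    intro x
    have hx := hker x
    rw [LinearMap.pi_apply_eq_sum_univ φ (LinearMap.pi f x)] at hx
    rw [← hx]
    refine Finset.sum_congr rfl fun i _ => ?_
    have hpi : (LinearMap.pi f x) i = f i x := rfl
    rw [hpi, smul_eq_mul, smul_eq_mul, mul_comm]
    congr 2
    funext j
    by_cases hji : i = j
    · subst hji; simp
    · simp [Pi.single_eq_of_ne (Ne.symm hji), hji]
  have hzero : ∀ i : ι, φ (Pi.single i 1) = 0 := by
    have hsum0 : ∑ i : ι, φ (Pi.single i 1) • f i = 0 := by
      apply LinearMap.ext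
      intro x
      rw [LinearMap.sum_apply]
      simpa using hcomb x
    exact Fintype.linearIndependent_iff.1 hf _ hsum0
  apply hφ0
  apply LinearMap.ext
  intro y
  rw [LinearMap.pi_apply_eq_sum_univ φ y]
  simp only [LinearMap.zero_apply]
  apply Finset.sum_eq_zero
  intro i _
  have : (fun j => if i = j then (1:F) else 0) = Pi.single i 1 := by
    funext j
    by_cases hji : i = j
    · subst hji; simp
    · simp [Pi.single_eq_of_ne (Ne.symm hji), hji]
  rw [this, hzero i, smul_zero]

end Reduction

section MainProof
variable {F : Type} [Field F] {n : ℕ} {orient : Fin n → Bool}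

noncomputable def dfinsuppLEquiv (F : Type) [Field F] {ι : Type} [Fintype ι] [DecidableEq ι]
    (β : ι → Type) [∀ i, AddCommGroup (β i)] [∀ i, Module F (β i)] :
    (Π₀ i, β i) ≃ₗ[F] ∀ i, β i :=
  { DFinsupp.equivFunOnFintype with
    map_add' := fun x y => by funext i; simp
    map_smul' := fun c x => by funext i; simp }

lemma dfinsuppLEquiv_apply (F : Type) [Field F] {ι : Type} [Fintype ι] [DecidableEq ι]
    (β : ι → Type) [∀ i, AddCommGroup (β i)] [∀ i, Module F (β i)]
    (x : Π₀ i, β i) (i : ι) : dfinsuppLEquiv F β x i = x i := rfl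

lemma dfinsuppLEquiv_symm_apply (F : Type) [Field F] {ι : Type} [Fintype ι] [DecidableEq ι]
    (β : ι → Type) [∀ i, AddCommGroup (β i)] [∀ i, Module F (β i)]
    (y : ∀ i, β i) (i : ι) : ((dfinsuppLEquiv F β).symm y) i = y i := rfl

def oHat (n : ℕ) (orient : Fin n → Bool) : ℕ → Bool :=
  fun i => if h : i < n then orient ⟨i, h⟩ else true

lemma oHat_eq (i : Fin n) : oHat n orient (i:ℕ) = orient i := dif_pos i.isLt

/-- Partial decomposition statement: the representation restricted to vertices `0..m`
is isomorphic (compatibly with arrows among those vertices) to a sum of intervals. -/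
def Decomp (M : ZigzagRep F n orient) (m : ℕ) : Prop :=
  ∃ (N : ℕ) (b d : Fin N → ℕ),
    (∀ k, b k ≤ d k ∧ d k ≤ m) ∧
    ∃ e : ∀ i : Fin (n+1), (i:ℕ) ≤ m →
        (M.V i ≃ₗ[F] ∀ k : Fin N, ↥(intervalSp F (b k) (d k) (i:ℕ))),
      (∀ (i : Fin n) (hi : (i:ℕ)+1 ≤ m) (ho : orient i = true) (x : M.V i.castSucc),
        e i.succ (by rw [Fin.val_succ]; omega) (M.fwd i ho x)
          = ivmapPi F b d (i:ℕ) ((i:ℕ)+1) (e i.castSucc (by rw [Fin.coe_castSucc]; omega) x)) ∧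
      (∀ (i : Fin n) (hi : (i:ℕ)+1 ≤ m) (ho : orient i = false) (x : M.V i.succ),
        e i.castSucc (by rw [Fin.coe_castSucc]; omega) (M.bwd i ho x)
          = ivmapPi F b d ((i:ℕ)+1) (i:ℕ) (e i.succ (by rw [Fin.val_succ]; omega) x))

lemma decomp_zero (M : ZigzagRep F n orient) (hfd : ∀ i, FiniteDimensional F (M.V i)) :
    Decomp M 0 := by
  classical
  haveI := hfd 0
  set N := Module.finrank F (M.V 0) with hN
  have e0 : M.V (0 : Fin (n+1)) ≃ₗ[F] ∀ _k : Fin N, ↥(intervalSp F 0 0 0) :=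
    (Module.finBasis F (M.V 0)).equivFun.trans
      (LinearEquiv.piCongrRight fun _k => unitMap F ⟨le_refl 0, le_refl 0⟩)
  refine ⟨N, fun _ => 0, fun _ => 0, fun k => ⟨le_refl _, le_refl _⟩,
    fun i hi => (show (0 : Fin (n+1)) = i from Fin.ext (by simp; omega)) ▸ e0, ?_, ?_⟩
  · intro i hi; exact absurd hi (by omega)
  · intro i hi; exact absurd hi (by omega)

lemma tau_inj (o : ℕ → Bool) : Function.Injective (tau o) := by
  intro u v heq
  rcases lt_trichotomy u v with h | h | h
  · rcases Bool.eq_false_or_eq_true (o (v-1)) with ho | ho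
    · exact absurd (tau_lt_of_true o h ho) (by omega)
    · exact absurd (tau_lt_of_false o h ho) (by omega)
  · exact h
  · rcases Bool.eq_false_or_eq_true (o (u-1)) with ho | ho
    · exact absurd (tau_lt_of_true o h ho) (by omega)
    · exact absurd (tau_lt_of_false o h ho) (by omega)

lemma mul_lex_lt {N : ℕ} {t1 t2 : ℤ} {k1 k2 : ℕ} (hk1 : k1 < N) (ht : t1 < t2) :
    ((N:ℤ)+1)*t1 + (k1:ℤ) < ((N:ℤ)+1)*t2 + (k2:ℤ) := by
  have e2 : ((N:ℤ)+1)*(t1+1) ≤ ((N:ℤ)+1)*t2 := by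
    apply mul_le_mul_of_nonneg_left (by omega) (by positivity)
  have e1 : ((N:ℤ)+1)*(t1+1) = ((N:ℤ)+1)*t1 + ((N:ℤ)+1) := by ring
  have e3 : (0:ℤ) ≤ (k2:ℤ) := Int.natCast_nonneg _
  have e4 : (k1:ℤ) < (N:ℤ) := by exact_mod_cast hk1
  omega

lemma decomp_step_fwd (M : ZigzagRep F n orient) (hfd : ∀ i, FiniteDimensional F (M.V i))
    (m : ℕ) (hm1 : m < n) (horient : orient ⟨m, hm1⟩ = true)
    (hD : Decomp M m) : Decomp M (m+1) := by
  classical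
  obtain ⟨N, b, d, hbd, e, ecF, ecB⟩ := hD
  set o : ℕ → Bool := oHat n orient with ho_def
  set a : Fin n := ⟨m, hm1⟩ with ha
  haveI : FiniteDimensional F (M.V a.succ) := hfd _
  have hcs : ((a.castSucc : Fin (n+1)):ℕ) ≤ m := le_of_eq rfl
  set E : M.V a.castSucc ≃ₗ[F] (∀ k : Fin N, ↥(intervalSp F (b k) (d k) m)) :=
    e a.castSucc hcs with hE
  set G : (∀ k : Fin N, ↥(intervalSp F (b k) (d k) m)) →ₗ[F] M.V a.succ :=
    (M.fwd a horient).comp E.symm.toLinearMap with hG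
  set onek : ∀ k : Fin N, ↥(intervalSp F (b k) (d k) m) := fun k =>
    if h : b k ≤ m ∧ m ≤ d k then ⟨1, by rw [intervalSp_eq_top F h]; trivial⟩ else 0 with honek
  set w0 : Fin N → M.V a.succ := fun k => G (Pi.single k (onek k)) with hw0
  have honek_val : ∀ (k : Fin N) (v : ↥(intervalSp F (b k) (d k) m)), v = (v:F) • onek k := by
    intro k v
    by_cases h : b k ≤ m ∧ m ≤ d k
    · apply Subtype.ext
      rw [honek]
      simp only [dif_pos h]
      rw [SetLike.val_smul, smul_eq_mul, mul_one]
    · have hv : (v:F) = 0 := intervalSp_val_eq_zero F h v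
      apply Subtype.ext
      rw [SetLike.val_smul, hv, zero_smul]
  have hGsingle : ∀ (k : Fin N) (v : ↥(intervalSp F (b k) (d k) m)),
      G (Pi.single k v) = (v:F) • w0 k := by
    intro k v
    conv_lhs => rw [honek_val k v, Pi.single_smul]
    rw [map_smul]
  have hGdecomp : ∀ z : (∀ k : Fin N, ↥(intervalSp F (b k) (d k) m)),
      G z = ∑ k : Fin N, (z k : F) • w0 k := by
    intro z
    conv_lhs => rw [← Finset.univ_sum_single z]
    rw [map_sum]
    exact Finset.sum_congr rfl fun k _ => hGsingle k (z k)
  set ω : Fin N → ℤ := fun k => ((N:ℤ)+1) * tau o (b k) + ((k:ℕ):ℤ) with hω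
  have hωinj : Function.Injective ω := by
    intro k1 k2 heq
    simp only [hω] at heq
    rcases lt_trichotomy (tau o (b k1)) (tau o (b k2)) with h | h | h
    · exact absurd heq (ne_of_lt (mul_lex_lt k1.isLt h))
    · rw [h] at heq
      have : ((k1:ℕ):ℤ) = ((k2:ℕ):ℤ) := by omega
      exact Fin.ext (by exact_mod_cast this)
    · exact absurd heq.symm (ne_of_lt (mul_lex_lt k2.isLt h))
  have hωlt : ∀ k j : Fin N, ω j < ω k → (b k = b j ∨ tau o (b j) < tau o (b k)) := by
    intro k j hlt
    rcases lt_trichotomy (tau o (b j)) (tau o (b k)) with h | h | h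
    · exact Or.inr h
    · exact Or.inl (tau_inj o h).symm
    · exfalso
      have := mul_lex_lt (k2 := (j:ℕ)) k.isLt h
      simp only [hω] at hlt
      omega
  obtain ⟨P, c, hc1, hc2, hc3, hc4, hc5, hc6⟩ := reduction (F := F) w0 ω hωinj
  have hwd : ∀ k : Fin N, w0 k ≠ 0 → d k = m := by
    intro k hw
    by_contra hdk
    apply hw
    have halive : ¬(b k ≤ m ∧ m ≤ d k) := by
      have := (hbd k).2; omega
    rw [hw0]
    simp only [honek, dif_neg halive, Pi.single_zero, map_zero]
  have hPd : ∀ k ∈ P, d k = m := fun k hk => hwd k (hc6 k hk)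
  have Hc : ∀ k j, c k j ≠ 0 → ∀ j', c j j' = 0 := fun k j hcj j' => hc4 j (hc1 k j hcj).1 j'
  have Hr : ∀ k j, c k j ≠ 0 → (b k = b j ∨ tau o (b j) < tau o (b k)) ∧ d k = d j := by
    intro k j hcj
    obtain ⟨hjP, hlt⟩ := hc1 k j hcj
    refine ⟨hωlt k j hlt, ?_⟩
    rw [hwd k (fun h0 => hcj (hc5 k h0 j)), hPd j hjP]
  -- vertex m+1 data
  set S := Submodule.span F (Set.range fun p : {x // x ∈ P} => w0 ↑p) with hS
  set bS : Module.Basis {x // x ∈ P} F ↥S := Module.Basis.span hc3 with hbS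
  obtain ⟨Cc, hCc⟩ := Submodule.exists_isCompl S
  set q := Module.finrank F ↥Cc with hq
  have bC : Module.Basis (Fin q) F ↥Cc := Module.finBasis F ↥Cc
  set Efin : M.V a.succ ≃ₗ[F] (({x // x ∈ P} → F) × (Fin q → F)) :=
    (Submodule.prodEquivOfIsCompl S Cc hCc).symm.trans (bS.equivFun.prodCongr bC.equivFun) with hEfin
  -- the key representation lemma at the top vertex
  have hGpsi : ∀ z : (∀ k : Fin N, ↥(intervalSp F (b k) (d k) m)),
      G ((psiE F b d c m Hc).symm z) = ∑ p : {x // x ∈ P}, ((z ↑p : ↥(intervalSp F _ _ m)) : F) • w0 ↑p := by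
    intro z
    rw [psiE_symm_apply, map_sub, hGdecomp z, hGdecomp (eta F b d c m z)]
    have hetaval : ∀ k : Fin N, ((eta F b d c m z k : ↥(intervalSp F (b k) (d k) m)) : F)
        = ∑ k' : Fin N, c k' k * (z k' : F) := by
      intro k
      rw [eta_apply, AddSubmonoidClass.coe_finset_sum]
      refine Finset.sum_congr rfl fun k' _ => ?_
      rw [SetLike.val_smul, smul_eq_mul]
      by_cases hck : c k' k = 0
      · rw [hck, zero_mul, zero_mul]
      · congr 1
        have hdk' : d k' = m := hwd k' (fun h0 => hck (hc5 k' h0 k))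
        have hdk : d k = m := by rw [← (Hr k' k hck).2]; exact hdk'
        rw [ivG_val, if_pos (intervalSp_le_iff F |>.2 (Or.inr
          ⟨le_trans (hbd k).1 (le_of_eq hdk), le_of_eq hdk.symm⟩))]
    have hB : ∑ k : Fin N, ((eta F b d c m z k : ↥(intervalSp F (b k) (d k) m)) : F) • w0 k
        = ∑ k : Fin N, (z k : F) • (if k ∈ P then 0 else w0 k) := by
      calc ∑ k : Fin N, ((eta F b d c m z k :
              ↥(intervalSp F (b k) (d k) m)) : F) • w0 k
          = ∑ k : Fin N, (∑ k' : Fin N, c k' k * (z k' : F)) • w0 k := by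
            exact Finset.sum_congr rfl fun k _ => by rw [hetaval k]
        _ = ∑ k : Fin N, ∑ k' : Fin N, (c k' k * (z k' : F)) • w0 k := by
            exact Finset.sum_congr rfl fun k _ => Finset.sum_smul
        _ = ∑ k' : Fin N, ∑ k : Fin N, (c k' k * (z k' : F)) • w0 k := Finset.sum_comm
        _ = ∑ k' : Fin N, (z k' : F) • (∑ k : Fin N, c k' k • w0 k) := by
            refine Finset.sum_congr rfl fun k' _ => ?_
            rw [Finset.smul_sum]
            exact Finset.sum_congr rfl fun k _ => by rw [smul_smul, mul_comm]
        _ = ∑ k' : Fin N, (z k' : F) • (if k' ∈ P then 0 else w0 k') := by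
            refine Finset.sum_congr rfl fun k' _ => ?_
            congr 1
            by_cases hk' : k' ∈ P
            · rw [if_pos hk']
              exact Finset.sum_eq_zero fun k _ => by rw [hc4 k' hk' k, zero_smul]
            · rw [if_neg hk']
              exact (hc2 k' hk').symm
    rw [hB, ← Finset.sum_sub_distrib]
    have : ∀ k : Fin N, (z k : F) • w0 k - (z k : F) • (if k ∈ P then 0 else w0 k)
        = if k ∈ P then (z k : F) • w0 k else 0 := by
      intro k
      by_cases hk : k ∈ P
      · rw [if_pos hk, if_pos hk, smul_zero, sub_zero]
      · rw [if_neg hk, if_neg hk, sub_self]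
    rw [Finset.sum_congr rfl fun k _ => this k]
    rw [Finset.sum_ite_mem, Finset.univ_inter]
    exact (Finset.sum_coe_sort P fun k => (z k : F) • w0 k).symm
  refine ⟨N+q, newb q m b, newd q m d P, ?_, ?_⟩
  · intro k
    unfold newb newd
    split_ifs with h hp
    · exact ⟨by have h1 := (hbd ⟨(k:ℕ),h⟩).1; have h2 := (hbd ⟨(k:ℕ),h⟩).2; omega, le_refl _⟩
    · exact ⟨(hbd ⟨(k:ℕ),h⟩).1, by have h2 := (hbd ⟨(k:ℕ),h⟩).2; omega⟩
    · exact ⟨le_refl _, le_refl _⟩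
  refine ⟨fun i hi => if h : (i:ℕ) ≤ m then
      (e i h).trans ((psiE F b d c (i:ℕ) Hc).trans (chi F q m b d P hPd (i:ℕ) h))
    else (show a.succ = i from Fin.ext
        (by rw [Fin.val_succ]; have hav : (a:ℕ) = m := rfl; omega)) ▸
      (Efin.trans (phiE F q m b d P hPd hbd)), ?_, ?_⟩
  · -- forward arrows
    intro i hi ho x
    by_cases hiold : (i:ℕ)+1 ≤ m
    · have h1 : ((i.succ : Fin (n+1)):ℕ) ≤ m := by rw [Fin.val_succ]; omega
      have h0 : ((i.castSucc : Fin (n+1)):ℕ) ≤ m := by rw [Fin.coe_castSucc]; omega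
      simp only [dif_pos h1, dif_pos h0]
      rw [LinearEquiv.trans_apply, LinearEquiv.trans_apply, LinearEquiv.trans_apply,
        LinearEquiv.trans_apply]
      rw [ecF i hiold ho x]
      have hoi : o (i:ℕ) = true := by rw [ho_def, oHat_eq]; exact ho
      have hpsi : ∀ y : (∀ k : Fin N, ↥(intervalSp F (b k) (d k) (i:ℕ))),
          (psiE F b d c ((i.succ : Fin (n+1)):ℕ) Hc) (ivmapPi F b d (i:ℕ) ((i:ℕ)+1) y)
          = ivmapPi F b d (i:ℕ) ((i:ℕ)+1) ((psiE F b d c (i:ℕ) Hc) y) := by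
        intro y
        rw [psiE_apply, psiE_apply, map_add]
        rw [eta_comm_fwd F o b d c (i:ℕ) Hr hoi]
        rfl
      rw [hpsi]
      exact (chi_comm F q m b d P hPd (i:ℕ) ((i:ℕ)+1) (by omega) h1
        ((psiE F b d c (i:ℕ) Hc) (e i.castSucc h0 x))).symm
    · -- the new arrow
      have hival : (i:ℕ) = m := by omega
      have hieq : i = a := Fin.ext (hival.trans rfl)
      subst hieq
      have hns : ¬((a.succ : Fin (n+1)):ℕ) ≤ m := by
        rw [Fin.val_succ]
        have hav : (a:ℕ) = m := rfl
        omega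
      simp only [dif_neg hns, dif_pos hcs]
      show (Efin.trans (phiE F q m b d P hPd hbd)) (M.fwd a ho x) = _
      simp only [LinearEquiv.trans_apply]
      have hfx : M.fwd a ho x
          = G ((psiE F b d c m Hc).symm ((psiE F b d c m Hc) (E x))) := by
        rw [LinearEquiv.symm_apply_apply]
        show M.fwd a ho x = (M.fwd a horient) (E.symm (E x))
        rw [LinearEquiv.symm_apply_apply]
      have hEfx : Efin (M.fwd a ho x)
          = (fun p : {x // x ∈ P} => (((psiE F b d c m Hc) (E x) ↑p :
              ↥(intervalSp F _ _ m)) : F), (0 : Fin q → F)) := by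
        rw [hfx, hGpsi ((psiE F b d c m Hc) (E x))]
        have hmem : (∑ p : {x // x ∈ P}, (((psiE F b d c m Hc) (E x) ↑p :
            ↥(intervalSp F _ _ m)) : F) • w0 ↑p) ∈ S :=
          Submodule.sum_mem _ (fun p _ => Submodule.smul_mem _ _
            (Submodule.subset_span ⟨p, rfl⟩))
        have hsubt : (⟨∑ p : {x // x ∈ P}, (((psiE F b d c m Hc) (E x) ↑p :
              ↥(intervalSp F _ _ m)) : F) • w0 ↑p, hmem⟩ : ↥S)
            = bS.equivFun.symm (fun p => (((psiE F b d c m Hc) (E x) ↑p :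
              ↥(intervalSp F _ _ m)) : F)) := by
          rw [Module.Basis.equivFun_symm_apply]
          apply Subtype.ext
          rw [AddSubmonoidClass.coe_finset_sum]
          exact Finset.sum_congr rfl fun p _ => by
            rw [SetLike.val_smul, hbS, Module.Basis.span_apply]
        have hE1 : (Submodule.prodEquivOfIsCompl S Cc hCc).symm
            (∑ p : {x // x ∈ P}, (((psiE F b d c m Hc) (E x) ↑p :
              ↥(intervalSp F _ _ m)) : F) • w0 ↑p) = (⟨_, hmem⟩, 0) := by
          apply (Submodule.prodEquivOfIsCompl S Cc hCc).injective
          rw [LinearEquiv.apply_symm_apply, Submodule.coe_prodEquivOfIsCompl']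
          simp
        rw [hEfin, LinearEquiv.trans_apply, hE1, LinearEquiv.prodCongr_apply]
        rw [map_zero, hsubt, LinearEquiv.apply_symm_apply]
      funext k
      apply Subtype.ext
      rw [hEfx, phiE_val F q m b d P hPd hbd, ivmapPi_apply, ivG_val, chi_val]
      by_cases h : (k:ℕ) < N
      · simp only [dif_pos h]
        by_cases hp : (⟨(k:ℕ),h⟩ : Fin N) ∈ P
        · simp only [dif_pos hp]
          rw [if_pos (intervalSp_le_iff F |>.2 (Or.inr (newsp_cond_mem q m b d P hbd k h hp)))]
          rfl
        · simp only [dif_neg hp]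
          by_cases hcnd : intervalSp F (newb q m b k) (newd q m d P k) m
              ≤ intervalSp F (newb q m b k) (newd q m d P k) (m+1)
          · rw [if_pos hcnd]
            have hbot : intervalSp F (b ⟨(k:ℕ),h⟩) (d ⟨(k:ℕ),h⟩) m = ⊥ := by
              have h2 := newsp_bot_nonP F q m b d P hbd k h hp
              have h3 := newsp_eq F q m b d P hPd m (le_refl m) k h
              rw [← h3]
              exact le_bot_iff.1 (h2 ▸ hcnd)
            exact (val_zero_of_bot F hbot _).symm
          · rw [if_neg hcnd]
      · simp only [dif_neg h]
        simp
  · -- backward arrows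
    intro i hi ho x
    by_cases hiold : (i:ℕ)+1 ≤ m
    · have h1 : ((i.succ : Fin (n+1)):ℕ) ≤ m := by rw [Fin.val_succ]; omega
      have h0 : ((i.castSucc : Fin (n+1)):ℕ) ≤ m := by rw [Fin.coe_castSucc]; omega
      simp only [dif_pos h0, dif_pos h1]
      rw [LinearEquiv.trans_apply, LinearEquiv.trans_apply, LinearEquiv.trans_apply,
        LinearEquiv.trans_apply]
      rw [ecB i hiold ho x]
      have hoi : o (i:ℕ) = false := by rw [ho_def, oHat_eq]; exact ho
      have hpsi : ∀ y : (∀ k : Fin N, ↥(intervalSp F (b k) (d k) ((i:ℕ)+1))),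
          (psiE F b d c ((i.castSucc : Fin (n+1)):ℕ) Hc) (ivmapPi F b d ((i:ℕ)+1) (i:ℕ) y)
          = ivmapPi F b d ((i:ℕ)+1) (i:ℕ) ((psiE F b d c ((i:ℕ)+1) Hc) y) := by
        intro y
        rw [psiE_apply, psiE_apply, map_add]
        rw [eta_comm_bwd F o b d c (i:ℕ) Hr hoi]
        rfl
      rw [hpsi]
      exact (chi_comm F q m b d P hPd ((i:ℕ)+1) (i:ℕ) h1 (by omega)
        ((psiE F b d c ((i:ℕ)+1) Hc) (e i.succ h1 x))).symm
    · exfalso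
      have hival : (i:ℕ) = m := by omega
      have hieq : i = a := Fin.ext (hival.trans rfl)
      rw [hieq, horient] at ho
      simp at ho

lemma decomp_step_bwd (M : ZigzagRep F n orient) (hfd : ∀ i, FiniteDimensional F (M.V i))
    (m : ℕ) (hm1 : m < n) (horient : orient ⟨m, hm1⟩ = false)
    (hD : Decomp M m) : Decomp M (m+1) := by
  classical
  obtain ⟨N, b, d, hbd, e, ecF, ecB⟩ := hD
  set o : ℕ → Bool := oHat n orient with ho_def
  set a : Fin n := ⟨m, hm1⟩ with ha
  haveI : FiniteDimensional F (M.V a.succ) := hfd _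
  have hcs : ((a.castSucc : Fin (n+1)):ℕ) ≤ m := le_of_eq rfl
  set E : M.V a.castSucc ≃ₗ[F] (∀ k : Fin N, ↥(intervalSp F (b k) (d k) m)) :=
    e a.castSucc hcs with hE
  set fv : Fin N → (M.V a.succ →ₗ[F] F) := fun k =>
    ((intervalSp F (b k) (d k) m).subtype.comp (LinearMap.proj k)).comp
      (E.toLinearMap.comp (M.bwd a horient)) with hfv
  have hfv_apply : ∀ (k : Fin N) (x : M.V a.succ),
      fv k x = ((E (M.bwd a horient x) k : ↥(intervalSp F (b k) (d k) m)) : F) :=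
    fun k x => rfl
  set ω : Fin N → ℤ := fun k => ((N:ℤ)+1) * tau o (b k) + ((k:ℕ):ℤ) with hω
  have hωinj : Function.Injective ω := by
    intro k1 k2 heq
    simp only [hω] at heq
    rcases lt_trichotomy (tau o (b k1)) (tau o (b k2)) with h | h | h
    · exact absurd heq (ne_of_lt (mul_lex_lt k1.isLt h))
    · rw [h] at heq
      have : ((k1:ℕ):ℤ) = ((k2:ℕ):ℤ) := by omega
      exact Fin.ext (by exact_mod_cast this)
    · exact absurd heq.symm (ne_of_lt (mul_lex_lt k2.isLt h))
  have hωlt : ∀ k j : Fin N, ω j < ω k → (b k = b j ∨ tau o (b j) < tau o (b k)) := by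
    intro k j hlt
    rcases lt_trichotomy (tau o (b j)) (tau o (b k)) with h | h | h
    · exact Or.inr h
    · exact Or.inl (tau_inj o h).symm
    · exfalso
      have := mul_lex_lt (k2 := (j:ℕ)) k.isLt h
      simp only [hω] at hlt
      omega
  set ωd : Fin N → ℤ := fun k => -(ω k) with hωd
  have hωdinj : Function.Injective ωd := by
    intro k1 k2 h
    apply hωinj
    simp only [hωd] at h
    omega
  obtain ⟨P, c', hc1, hc2, hc3, hc4, hc5, hc6⟩ := reduction (F := F) fv ωd hωdinj
  set c : Fin N → Fin N → F := fun k j => -(c' j k) with hcdef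
  have hcne : ∀ k j : Fin N, c k j ≠ 0 ↔ c' j k ≠ 0 := by
    intro k j
    simp [hcdef]
  have hfvd : ∀ k : Fin N, fv k ≠ 0 → d k = m := by
    intro k hne
    by_contra hdk
    apply hne
    have halive : ¬(b k ≤ m ∧ m ≤ d k) := by have := (hbd k).2; omega
    apply LinearMap.ext; intro x
    simp only [LinearMap.zero_apply]
    rw [hfv_apply]
    exact intervalSp_val_eq_zero F halive _
  have hPd : ∀ k ∈ P, d k = m := fun k hk => hfvd k (hc6 k hk)
  have Hc : ∀ k j : Fin N, c k j ≠ 0 → ∀ j' : Fin N, c j j' = (0:F) := by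
    intro k j hcj j'
    have h1 : c' j k ≠ 0 := (hcne k j).1 hcj
    have hjnP : j ∉ P := fun hjP => h1 (hc4 j hjP k)
    by_contra h2
    have h3 : c' j' j ≠ 0 := (hcne j j').1 h2
    exact hjnP (hc1 j' j h3).1
  have Hr : ∀ k j : Fin N, c k j ≠ 0 → (b k = b j ∨ tau o (b j) < tau o (b k)) ∧ d k = d j := by
    intro k j hcj
    have h1 : c' j k ≠ 0 := (hcne k j).1 hcj
    obtain ⟨hkP, hlt⟩ := hc1 j k h1
    have hlt' : ω j < ω k := by simp only [hωd] at hlt; omega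
    refine ⟨hωlt k j hlt', ?_⟩
    rw [hfvd k (hc6 k hkP), hfvd j (fun h0 => h1 (hc5 j h0 k))]
  -- splitting of the top vertex space
  set T : M.V a.succ →ₗ[F] ({x // x ∈ P} → F) := LinearMap.pi (fun p => fv ↑p) with hT
  have hTsurj : Function.Surjective T := surj_of_indep (fun p : {x // x ∈ P} => fv ↑p) hc3
  obtain ⟨sT, hsT⟩ := T.exists_rightInverse_of_surjective (LinearMap.range_eq_top.2 hTsurj)
  have hsT' : ∀ v, T (sT v) = v := by
    intro v
    have := LinearMap.ext_iff.1 hsT v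
    simpa using this
  set Kker := LinearMap.ker T with hK
  set q := Module.finrank F ↥Kker with hq
  set bK : Module.Basis (Fin q) F ↥Kker := Module.finBasis F ↥Kker with hbK
  have hker_mem : ∀ x : M.V a.succ, x - sT (T x) ∈ Kker := by
    intro x
    rw [hK, LinearMap.mem_ker, map_sub, hsT', sub_self]
  set Keq : M.V a.succ ≃ₗ[F] (↥Kker × ({x // x ∈ P} → F)) := LinearEquiv.ofLinear
    (LinearMap.prod ((LinearMap.id - sT.comp T).codRestrict Kker (fun x => hker_mem x)) T)
    ((Kker.subtype.comp (LinearMap.fst F _ _)) + (sT.comp (LinearMap.snd F _ _)))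
    (by
      apply LinearMap.ext
      rintro ⟨y, cf⟩
      have hTy : T (y : M.V a.succ) = 0 := LinearMap.mem_ker.1 y.2
      apply Prod.ext
      · apply Subtype.ext
        show ((y : M.V a.succ) + sT cf) - sT (T ((y : M.V a.succ) + sT cf)) = (y : M.V a.succ)
        rw [map_add, hsT', hTy, zero_add]
        abel
      · show T ((y : M.V a.succ) + sT cf) = cf
        rw [map_add, hsT', hTy, zero_add])
    (by
      apply LinearMap.ext
      intro x
      show (x - sT (T x)) + sT (T x) = x
      abel) with hKeq
  set Efin : M.V a.succ ≃ₗ[F] (({x // x ∈ P} → F) × (Fin q → F)) :=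
    Keq.trans ((bK.equivFun.prodCongr (LinearEquiv.refl F _)).trans
      (LinearEquiv.prodComm F _ _)) with hEfin
  have hEfin_fst : ∀ (x : M.V a.succ) (p : {x // x ∈ P}), (Efin x).1 p = fv ↑p x :=
    fun x p => rfl
  -- the key coordinate computation
  have hpsi_coord : ∀ (hor : orient a = false) (x : M.V a.succ) (j : Fin N),
      ((psiE F b d c ((a.castSucc : Fin (n+1)):ℕ) Hc (E (M.bwd a hor x)) j :
          ↥(intervalSp F (b j) (d j) ((a.castSucc : Fin (n+1)):ℕ))) : F)
      = (if j ∈ P then fv j x else 0) := by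
    intro hor x j
    show ((psiE F b d c m Hc (E (M.bwd a horient x)) j :
        ↥(intervalSp F (b j) (d j) m)) : F) = _
    rw [psiE_apply]
    have hadd : ((((E (M.bwd a horient x)) + eta F b d c m (E (M.bwd a horient x))) j :
        ↥(intervalSp F (b j) (d j) m)) : F)
        = ((E (M.bwd a horient x) j : ↥(intervalSp F (b j) (d j) m)) : F)
          + ((eta F b d c m (E (M.bwd a horient x)) j :
              ↥(intervalSp F (b j) (d j) m)) : F) := rfl
    rw [hadd, ← hfv_apply]
    have h2 : ((eta F b d c m (E (M.bwd a horient x)) j :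
        ↥(intervalSp F (b j) (d j) m)) : F)
        = ∑ k' : Fin N, c k' j * fv k' x := by
      rw [eta_apply, AddSubmonoidClass.coe_finset_sum]
      refine Finset.sum_congr rfl fun k' _ => ?_
      rw [SetLike.val_smul, smul_eq_mul]
      by_cases hck : c k' j = 0
      · rw [hck, zero_mul, zero_mul]
      · congr 1
        have hc'jk : c' j k' ≠ 0 := (hcne k' j).1 hck
        have hdj : d j = m := hfvd j (fun h0 => hc'jk (hc5 j h0 k'))
        rw [ivG_val, if_pos (intervalSp_le_iff F |>.2 (Or.inr
          ⟨le_trans (hbd j).1 (le_of_eq hdj), le_of_eq hdj.symm⟩))]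
        rfl
    rw [h2]
    by_cases hjP : j ∈ P
    · rw [if_pos hjP]
      have hz : ∀ k' : Fin N, c k' j * fv k' x = 0 := by
        intro k'
        have : c k' j = -(c' j k') := rfl
        rw [this, hc4 j hjP k', neg_zero, zero_mul]
      rw [Finset.sum_eq_zero (fun k' _ => hz k'), add_zero]
    · rw [if_neg hjP]
      have hrep := hc2 j hjP
      have hrep' : fv j x = ∑ k' : Fin N, c' j k' * fv k' x := by
        have h3 := LinearMap.ext_iff.1 hrep x
        rw [h3]
        rw [LinearMap.sum_apply]
        exact Finset.sum_congr rfl fun k' _ => by rw [LinearMap.smul_apply, smul_eq_mul]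
      rw [hrep', ← Finset.sum_add_distrib]
      apply Finset.sum_eq_zero
      intro k' _
      have hck : c k' j = -(c' j k') := rfl
      rw [hck]; ring
  refine ⟨N+q, newb q m b, newd q m d P, ?_, ?_⟩
  · intro k
    unfold newb newd
    split_ifs with h hp
    · exact ⟨by have h1 := (hbd ⟨(k:ℕ),h⟩).1; have h2 := (hbd ⟨(k:ℕ),h⟩).2; omega, le_refl _⟩
    · exact ⟨(hbd ⟨(k:ℕ),h⟩).1, by have h2 := (hbd ⟨(k:ℕ),h⟩).2; omega⟩
    · exact ⟨le_refl _, le_refl _⟩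
  refine ⟨fun i hi => if h : (i:ℕ) ≤ m then
      (e i h).trans ((psiE F b d c (i:ℕ) Hc).trans (chi F q m b d P hPd (i:ℕ) h))
    else (show a.succ = i from Fin.ext
        (by rw [Fin.val_succ]; have hav : (a:ℕ) = m := rfl; omega)) ▸
      (Efin.trans (phiE F q m b d P hPd hbd)), ?_, ?_⟩
  · -- forward arrows (old zone only; the new arrow is backward)
    intro i hi ho x
    by_cases hiold : (i:ℕ)+1 ≤ m
    · have h1 : ((i.succ : Fin (n+1)):ℕ) ≤ m := by rw [Fin.val_succ]; omega
      have h0 : ((i.castSucc : Fin (n+1)):ℕ) ≤ m := by rw [Fin.coe_castSucc]; omega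
      simp only [dif_pos h1, dif_pos h0]
      rw [LinearEquiv.trans_apply, LinearEquiv.trans_apply, LinearEquiv.trans_apply,
        LinearEquiv.trans_apply]
      rw [ecF i hiold ho x]
      have hoi : o (i:ℕ) = true := by rw [ho_def, oHat_eq]; exact ho
      have hpsi : ∀ y : (∀ k : Fin N, ↥(intervalSp F (b k) (d k) (i:ℕ))),
          (psiE F b d c ((i.succ : Fin (n+1)):ℕ) Hc) (ivmapPi F b d (i:ℕ) ((i:ℕ)+1) y)
          = ivmapPi F b d (i:ℕ) ((i:ℕ)+1) ((psiE F b d c (i:ℕ) Hc) y) := by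
        intro y
        rw [psiE_apply, psiE_apply, map_add]
        rw [eta_comm_fwd F o b d c (i:ℕ) Hr hoi]
        rfl
      rw [hpsi]
      exact (chi_comm F q m b d P hPd (i:ℕ) ((i:ℕ)+1) (by omega) h1
        ((psiE F b d c (i:ℕ) Hc) (e i.castSucc h0 x))).symm
    · exfalso
      have hival : (i:ℕ) = m := by omega
      have hieq : i = a := Fin.ext (hival.trans rfl)
      rw [hieq, horient] at ho
      simp at ho
  · -- backward arrows
    intro i hi ho x
    by_cases hiold : (i:ℕ)+1 ≤ m
    · have h1 : ((i.succ : Fin (n+1)):ℕ) ≤ m := by rw [Fin.val_succ]; omega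
      have h0 : ((i.castSucc : Fin (n+1)):ℕ) ≤ m := by rw [Fin.coe_castSucc]; omega
      simp only [dif_pos h0, dif_pos h1]
      rw [LinearEquiv.trans_apply, LinearEquiv.trans_apply, LinearEquiv.trans_apply,
        LinearEquiv.trans_apply]
      rw [ecB i hiold ho x]
      have hoi : o (i:ℕ) = false := by rw [ho_def, oHat_eq]; exact ho
      have hpsi : ∀ y : (∀ k : Fin N, ↥(intervalSp F (b k) (d k) ((i:ℕ)+1))),
          (psiE F b d c ((i.castSucc : Fin (n+1)):ℕ) Hc) (ivmapPi F b d ((i:ℕ)+1) (i:ℕ) y)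
          = ivmapPi F b d ((i:ℕ)+1) (i:ℕ) ((psiE F b d c ((i:ℕ)+1) Hc) y) := by
        intro y
        rw [psiE_apply, psiE_apply, map_add]
        rw [eta_comm_bwd F o b d c (i:ℕ) Hr hoi]
        rfl
      rw [hpsi]
      exact (chi_comm F q m b d P hPd ((i:ℕ)+1) (i:ℕ) h1 (by omega)
        ((psiE F b d c ((i:ℕ)+1) Hc) (e i.succ h1 x))).symm
    · -- the new arrow
      have hival : (i:ℕ) = m := by omega
      have hieq : i = a := Fin.ext (hival.trans rfl)
      subst hieq
      have hns : ¬((a.succ : Fin (n+1)):ℕ) ≤ m := by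
        rw [Fin.val_succ]
        have hav : (a:ℕ) = m := rfl
        omega
      simp only [dif_pos hcs, dif_neg hns]
      show _ = ivmapPi F (newb q m b) (newd q m d P) ((a:ℕ)+1) (a:ℕ)
        ((Efin.trans (phiE F q m b d P hPd hbd)) x)
      simp only [LinearEquiv.trans_apply]
      funext k
      apply Subtype.ext
      rw [ivmapPi_apply, ivG_val, chi_val, phiE_val F q m b d P hPd hbd]
      rw [← hE]
      by_cases h : (k:ℕ) < N
      · simp only [dif_pos h]
        refine (hpsi_coord ho x ⟨(k:ℕ),h⟩).trans ?_
        by_cases hp : (⟨(k:ℕ),h⟩ : Fin N) ∈ P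
        · simp only [dif_pos hp]
          rw [if_pos hp]
          have hcond : newb q m b k ≤ m ∧ m ≤ newd q m d P k := by
            constructor
            · have hb' : newb q m b k = b ⟨(k:ℕ),h⟩ := dif_pos h
              rw [hb']
              have h1 := (hbd ⟨(k:ℕ),h⟩).1
              have h2 := hPd ⟨(k:ℕ),h⟩ hp
              omega
            · have hd' : newd q m d P k = m+1 := by
                unfold newd; rw [dif_pos h, if_pos hp]
              rw [hd']
              omega
          rw [if_pos (intervalSp_le_iff F |>.2 (Or.inr hcond))]
          exact (hEfin_fst x ⟨⟨(k:ℕ),h⟩,hp⟩).symm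
        · simp only [dif_neg hp]
          rw [if_neg hp]
          have hcond2 : intervalSp F (newb q m b k) (newd q m d P k) (m+1)
              ≤ intervalSp F (newb q m b k) (newd q m d P k) m := by
            rw [newsp_bot_nonP F q m b d P hbd k h hp]
            exact bot_le
          rw [if_pos hcond2]
      · simp only [dif_neg h]
        have hcond3 : ¬(intervalSp F (newb q m b k) (newd q m d P k) (m+1)
            ≤ intervalSp F (newb q m b k) (newd q m d P k) m) := by
          rw [intervalSp_le_iff]
          have hb : newb q m b k = m+1 := dif_neg h
          have hd : newd q m d P k = m+1 := dif_neg h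
          rw [hb, hd]
          omega
        rw [if_neg hcond3]

end MainProof
/-- **Gabriel's theorem for `A_n`-type quivers.** Every finite-dimensional representation
of an `A_n`-type quiver over a field `F` is isomorphic to a direct sum of interval
representations `I[b;d]`. -/
theorem gabriel_interval_decomposition (F : Type) [Field F] (n : ℕ)
    (orient : Fin n → Bool) (M : ZigzagRep F n orient)
    (hfd : ∀ i, FiniteDimensional F (M.V i)) :
    ∃ (N : ℕ) (b d : Fin N → ℕ),
      (∀ k, b k ≤ d k ∧ d k ≤ n) ∧
      Nonempty (ZigzagRep.Iso M
        (ZigzagRep.dsum fun k : Fin N => intervalRep F n orient (b k) (d k))) := by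
  classical
  have hDn : Decomp M n := by
    have hstep : ∀ m : ℕ, m ≤ n → Decomp M m := by
      intro m
      induction m with
      | zero => intro _; exact decomp_zero M hfd
      | succ m ih =>
        intro hm
        have hmn : m < n := by omega
        rcases Bool.eq_false_or_eq_true (orient ⟨m, hmn⟩) with ho | ho
        · exact decomp_step_fwd M hfd m hmn ho (ih (by omega))
        · exact decomp_step_bwd M hfd m hmn ho (ih (by omega))
    exact hstep n (le_refl n)
  obtain ⟨N, b, d, hbd, e, ecF, ecB⟩ := hDn
  refine ⟨N, b, d, fun k => (hbd k), ⟨{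
    e := fun i => (e i (by have := i.isLt; omega)).trans
      (dfinsuppLEquiv F (fun k : Fin N => ↥(intervalSp F (b k) (d k) (i:ℕ)))).symm
    comm_fwd := ?_
    comm_bwd := ?_ }⟩⟩
  · intro i h x
    erw [LinearEquiv.trans_apply, LinearEquiv.trans_apply]
    rw [ecF i (by omega) h x]
    refine DFinsupp.ext fun k => ?_
    rfl
  · intro i h x
    erw [LinearEquiv.trans_apply, LinearEquiv.trans_apply]
    rw [ecB i (by omega) h x]
    refine DFinsupp.ext fun k => ?_
    rfl
end

section
/- Let V and W be zigzag modules related by a reversed reflection diamond at index i, where the map g : W → V at the apex satisfies: g is surjective of nullity 1 and the other two diamond maps are identities. Then W ≅ V ⊕ I[i;i]. -/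
variable {F : Type} [Field F] {n : ℕ} {orient : Fin n → Bool}

section RRDAux

variable {F : Type} [Field F]

/-- Auxiliary: product with a subsingleton module. -/
def withSubsingleton (M S : Type) [AddCommGroup M] [Module F M] [AddCommGroup S] [Module F S]
    (hS : Subsingleton S) : M ≃ₗ[F] M × S where
  toFun x := (x, 0)
  map_add' x y := by simp
  map_smul' c x := by simp
  invFun p := p.1
  left_inv x := rfl
  right_inv p := by
    obtain ⟨a, b⟩ := p
    simp [hS.elim (0 : S) b]

/-- Auxiliary: a split surjection gives a product decomposition with the kernel. -/
noncomputable def splitKerEquiv {M N : Type} [AddCommGroup M] [Module F M]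
    [AddCommGroup N] [Module F N] (g : M →ₗ[F] N) (s : N →ₗ[F] M)
    (hs : g ∘ₗ s = LinearMap.id) : M ≃ₗ[F] N × LinearMap.ker g :=
  LinearEquiv.ofLinear
    (LinearMap.prod g ((LinearMap.id - s ∘ₗ g).codRestrict (LinearMap.ker g) (fun x => by
      have h := LinearMap.congr_fun hs (g x)
      simp only [LinearMap.coe_comp, Function.comp_apply, LinearMap.id_coe, id_eq] at h
      simp [LinearMap.mem_ker, LinearMap.sub_apply, h])))
    (s ∘ₗ LinearMap.fst F N (LinearMap.ker g)
      + (LinearMap.ker g).subtype ∘ₗ LinearMap.snd F N (LinearMap.ker g))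
    (by
      apply LinearMap.ext
      rintro ⟨v, k, hk⟩
      have hgs := LinearMap.congr_fun hs v
      simp only [LinearMap.coe_comp, Function.comp_apply, LinearMap.id_coe, id_eq] at hgs
      have hk0 : g k = 0 := hk
      refine Prod.ext ?_ (Subtype.ext ?_) <;>
        simp [hgs, hk0])
    (by
      apply LinearMap.ext
      intro x
      simp)

lemma intervalRep_subsingleton (F : Type) [Field F] (n : ℕ) (orient : Fin n → Bool)
    (b d : ℕ) (j : Fin (n + 1)) (h : ¬(b ≤ (j : ℕ) ∧ (j : ℕ) ≤ d)) :
    Subsingleton ((intervalRep F n orient b d).V j) := by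
  show Subsingleton ↥(intervalSp F b d (j : ℕ))
  rw [intervalSp, if_neg h]
  infer_instance

end RRDAux

set_option maxHeartbeats 1600000 in
/-- **Reversed Reflection Diamond Principle, surjective case.** Let `V` and `W` be zigzag
modules related by a reversed reflection diamond at index `i = m+1`: they agree at all
other indices, the bottom module has identity maps (isomorphisms) from `V_i` to both
neighbours, and the top module has the map `g : W_i → V_i` (composed with the outgoing
identifications) to both neighbours. If `g` is surjective of nullity 1, then
`W ≅ V ⊕ I[i;i]`. -/
theorem reversed_reflection_diamond_surjective (F : Type) [Field F] (n m : ℕ)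
    (hm : m + 1 < n) (orient : Fin n → Bool)
    (horA : orient ⟨m, by omega⟩ = false) (horC : orient ⟨m + 1, hm⟩ = true)
    (VRep WRep : ZigzagRep F n orient)
    (hfdV : ∀ j, FiniteDimensional F (VRep.V j)) (hfdW : ∀ j, FiniteDimensional F (WRep.V j))
    (e : ∀ j : Fin (n + 1), (j : ℕ) ≠ m + 1 → (VRep.V j ≃ₗ[F] WRep.V j))
    (hcomm_fwd : ∀ (k : Fin n) (hk : (k : ℕ) ≠ m) (hk' : (k : ℕ) ≠ m + 1)
      (h : orient k = true)
      (hs : ((k.succ : Fin (n+1)) : ℕ) ≠ m + 1)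
      (hc : ((k.castSucc : Fin (n+1)) : ℕ) ≠ m + 1) (x : VRep.V k.castSucc),
        e k.succ hs (VRep.fwd k h x) = WRep.fwd k h (e k.castSucc hc x))
    (hcomm_bwd : ∀ (k : Fin n) (hk : (k : ℕ) ≠ m) (hk' : (k : ℕ) ≠ m + 1)
      (h : orient k = false)
      (hs : ((k.succ : Fin (n+1)) : ℕ) ≠ m + 1)
      (hc : ((k.castSucc : Fin (n+1)) : ℕ) ≠ m + 1) (x : VRep.V k.succ),
        e k.castSucc hc (VRep.bwd k h x) = WRep.bwd k h (e k.succ hs x))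
    -- the two maps of the bottom module at the diamond are "identities" (isomorphisms):
    (hbijA : Function.Bijective (VRep.bwd ⟨m, by omega⟩ horA))
    (hbijC : Function.Bijective (VRep.fwd ⟨m + 1, hm⟩ horC))
    -- the map `g` of the top module at the diamond:
    (g : WRep.V ⟨m + 1, by omega⟩ →ₗ[F] VRep.V ⟨m + 1, by omega⟩)
    (hgA : (VRep.bwd ⟨m, by omega⟩ horA) ∘ₗ g
      = (e (Fin.castSucc ⟨m, by omega⟩) (by simp)).symm.toLinearMap
          ∘ₗ WRep.bwd ⟨m, by omega⟩ horA)
    (hgC : (VRep.fwd ⟨m + 1, hm⟩ horC) ∘ₗ g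
      = (e (Fin.succ ⟨m + 1, hm⟩) (by simp)).symm.toLinearMap
          ∘ₗ WRep.fwd ⟨m + 1, hm⟩ horC)
    (hsurj : Function.Surjective g)
    (hnull : Module.finrank F (LinearMap.ker g) = 1) :
    Nonempty (ZigzagRep.Iso WRep
      (ZigzagRep.prod VRep (intervalRep F n orient (m + 1) (m + 1)))) := by
  classical
  have him : m + 1 < n + 1 := by omega
  obtain ⟨s, hs⟩ := g.exists_rightInverse_of_surjective (LinearMap.range_eq_top.2 hsurj)
  haveI := hfdW ⟨m + 1, by omega⟩
  haveI : FiniteDimensional F (LinearMap.ker g) := inferInstance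
  have htop : intervalSp F (m + 1) (m + 1) (m + 1) = ⊤ := if_pos ⟨le_rfl, le_rfl⟩
  haveI : FiniteDimensional F ↥(intervalSp F (m + 1) (m + 1) (m + 1)) := inferInstance
  have hfr : Module.finrank F (LinearMap.ker g)
      = Module.finrank F ↥(intervalSp F (m + 1) (m + 1) (m + 1)) := by
    rw [hnull, htop, finrank_top, Module.finrank_self]
  set ε : ∀ j : Fin (n + 1), WRep.V j ≃ₗ[F]
      (ZigzagRep.prod VRep (intervalRep F n orient (m + 1) (m + 1))).V j := fun j =>
    if h : (j : ℕ) = m + 1 then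
      (Fin.ext h : j = (⟨m + 1, him⟩ : Fin (n + 1))).symm ▸
        ((splitKerEquiv g s hs).trans
          ((LinearEquiv.refl F (VRep.V ⟨m + 1, by omega⟩)).prodCongr
            (LinearEquiv.ofFinrankEq ↥(LinearMap.ker g) ↥(intervalSp F (m + 1) (m + 1) (m + 1)) hfr :
              ↥(LinearMap.ker g) ≃ₗ[F] ↥(intervalSp F (m + 1) (m + 1) (m + 1)))))
    else
      (e j h).symm.trans (withSubsingleton _ _
        (intervalRep_subsingleton F n orient (m + 1) (m + 1) j (by omega))) with hε
  have hP1 : ∀ (j : Fin (n + 1)) (hj : ¬(j : ℕ) = m + 1) (y : WRep.V j),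
      ε j y = ((e j hj).symm y, 0) := by
    intro j hj y
    simp only [hε]
    rw [dif_neg hj]
    rfl
  have hP2 : ∀ y : WRep.V ⟨m + 1, him⟩, (ε ⟨m + 1, him⟩ y).1 = g y := by
    intro y
    rw [hε]
    beta_reduce
    rw [dif_pos (show (((⟨m + 1, him⟩ : Fin (n + 1)) : ℕ)) = m + 1 from rfl)]
    rfl
  refine ⟨⟨ε, ?_, ?_⟩⟩
  · -- comm_fwd
    rintro ⟨kv, hkn⟩ h x
    rcases eq_or_ne m kv with rfl | hkm
    · exact absurd (horA.symm.trans h) (by simp)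
    rcases eq_or_ne (m + 1) kv with rfl | hk1
    · -- critical arrow C
      have hm2 : (m : ℕ) + 1 + 1 ≠ m + 1 := by omega
      have hsn : ¬((Fin.succ (⟨m + 1, hkn⟩ : Fin n) : Fin (n + 1)) : ℕ) = m + 1 := hm2
      rw [hP1 _ hsn (WRep.fwd ⟨m + 1, hkn⟩ h x)]
      refine Prod.ext ?_ ?_
      · show (e (Fin.succ ⟨m + 1, hkn⟩) hsn).symm (WRep.fwd ⟨m + 1, hkn⟩ h x)
          = VRep.fwd ⟨m + 1, hkn⟩ h ((ε (Fin.castSucc ⟨m + 1, hkn⟩) x).1)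
        have h2 : (ε (Fin.castSucc ⟨m + 1, hkn⟩) x).1 = g x := hP2 x
        rw [h2]
        exact (LinearMap.congr_fun hgC x).symm
      · exact (intervalRep_subsingleton F n orient (m + 1) (m + 1)
          (Fin.succ ⟨m + 1, hkn⟩) (show ¬(m + 1 ≤ m + 1 + 1 ∧ m + 1 + 1 ≤ m + 1) by omega)).elim _ _
    · -- generic arrow
      have hsn : ¬((Fin.succ (⟨kv, hkn⟩ : Fin n) : Fin (n + 1)) : ℕ) = m + 1 :=
        (show ¬(kv + 1 = m + 1) by omega)
      have hcn : ¬((Fin.castSucc (⟨kv, hkn⟩ : Fin n) : Fin (n + 1)) : ℕ) = m + 1 :=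
        (show ¬(kv = m + 1) by omega)
      rw [hP1 _ hsn (WRep.fwd ⟨kv, hkn⟩ h x), hP1 _ hcn x]
      refine Prod.ext ?_ ?_
      · show (e (Fin.succ ⟨kv, hkn⟩) hsn).symm (WRep.fwd ⟨kv, hkn⟩ h x)
          = VRep.fwd ⟨kv, hkn⟩ h ((e (Fin.castSucc ⟨kv, hkn⟩) hcn).symm x)
        rw [LinearEquiv.symm_apply_eq,
          hcomm_fwd ⟨kv, hkn⟩ (fun hh => hkm hh.symm) (fun hh => hk1 hh.symm) h hsn hcn
            ((e (Fin.castSucc ⟨kv, hkn⟩) hcn).symm x),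
          LinearEquiv.apply_symm_apply]
      · exact (intervalRep_subsingleton F n orient (m + 1) (m + 1)
          (Fin.succ ⟨kv, hkn⟩) (show ¬(m + 1 ≤ kv + 1 ∧ kv + 1 ≤ m + 1) by omega)).elim _ _
  · -- comm_bwd
    rintro ⟨kv, hkn⟩ h x
    rcases eq_or_ne (m + 1) kv with rfl | hk1
    · exact absurd (horC.symm.trans h) (by simp)
    rcases eq_or_ne m kv with rfl | hkm
    · -- critical arrow A
      have hmn : ¬((Fin.castSucc (⟨m, hkn⟩ : Fin n) : Fin (n + 1)) : ℕ) = m + 1 :=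
        (show ¬(m = m + 1) by omega)
      rw [hP1 _ hmn (WRep.bwd ⟨m, hkn⟩ h x)]
      refine Prod.ext ?_ ?_
      · show (e (Fin.castSucc ⟨m, hkn⟩) hmn).symm (WRep.bwd ⟨m, hkn⟩ h x)
          = VRep.bwd ⟨m, hkn⟩ h ((ε (Fin.succ ⟨m, hkn⟩) x).1)
        have h2 : (ε (Fin.succ ⟨m, hkn⟩) x).1 = g x := hP2 x
        rw [h2]
        exact (LinearMap.congr_fun hgA x).symm
      · exact (intervalRep_subsingleton F n orient (m + 1) (m + 1)
          (Fin.castSucc ⟨m, hkn⟩) (show ¬(m + 1 ≤ m ∧ m ≤ m + 1) by omega)).elim _ _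
    · -- generic arrow
      have hsn : ¬((Fin.succ (⟨kv, hkn⟩ : Fin n) : Fin (n + 1)) : ℕ) = m + 1 :=
        (show ¬(kv + 1 = m + 1) by omega)
      have hcn : ¬((Fin.castSucc (⟨kv, hkn⟩ : Fin n) : Fin (n + 1)) : ℕ) = m + 1 :=
        (show ¬(kv = m + 1) by omega)
      rw [hP1 _ hcn (WRep.bwd ⟨kv, hkn⟩ h x), hP1 _ hsn x]
      refine Prod.ext ?_ ?_
      · show (e (Fin.castSucc ⟨kv, hkn⟩) hcn).symm (WRep.bwd ⟨kv, hkn⟩ h x)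
          = VRep.bwd ⟨kv, hkn⟩ h ((e (Fin.succ ⟨kv, hkn⟩) hsn).symm x)
        rw [LinearEquiv.symm_apply_eq,
          hcomm_bwd ⟨kv, hkn⟩ (fun hh => hkm hh.symm) (fun hh => hk1 hh.symm) h hsn hcn
            ((e (Fin.succ ⟨kv, hkn⟩) hsn).symm x),
          LinearEquiv.apply_symm_apply]
      · exact (intervalRep_subsingleton F n orient (m + 1) (m + 1)
          (Fin.castSucc ⟨kv, hkn⟩) (show ¬(m + 1 ≤ kv ∧ kv ≤ m + 1) by omega)).elim _ _
end

section
/- In the greedy pairing algorithm for the reversed reflection diamond, at each iteration j ∈ {1,...,p−1}, if b_j has not yet been paired, then there exists an index j_0 already processed or equal to ℓ_p such that b_{j_0} ≤_b b_j and d_{j_0} ≤_d d_j. -/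
/-- A run of the greedy pairing algorithm for the reversed reflection diamond.
Births are the values `b k` compared by the relation `leb`; `ell j` is the index of the
birth paired with death `d j` at step `j`, and `S j` is the set of indices whose births
have been paired after the first `j` steps (with the minimal birth `b (ell (p-1))` paired
initially, with the death `d (p-1)`). -/
structure GreedyRun (p : ℕ) {β : Type} (leb : β → β → Prop) (b : Fin p → β) where
  hp : 0 < p
  ell : Fin p → Fin p
  S : ℕ → Finset (Fin p)
  /-- `b (ell (p-1))` is the minimal birth in the order `leb`. -/
  hlast : ∀ k, leb (b (ell ⟨p - 1, by omega⟩)) (b k)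
  /-- initially only the minimal birth is paired (with the minimal death `d (p-1)`). -/
  hS0 : S 0 = {ell ⟨p - 1, by omega⟩}
  /-- the greedy step: at step `j` (for `j = 0,…,p-2`), if the birth `b j` is not yet
  paired then it is paired with `d j`; otherwise `d j` is paired with the `leb`-minimal
  not-yet-paired birth. -/
  hstep : ∀ j : ℕ, ∀ hj : j < p - 1,
    if (⟨j, by omega⟩ : Fin p) ∈ S j then
      (ell ⟨j, by omega⟩ ∉ S j ∧
       (∀ k : Fin p, k ∉ S j → leb (b (ell ⟨j, by omega⟩)) (b k)) ∧
       S (j + 1) = insert (ell ⟨j, by omega⟩) (S j))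
    else
      (ell ⟨j, by omega⟩ = ⟨j, by omega⟩ ∧ S (j + 1) = insert (⟨j, by omega⟩ : Fin p) (S j))

/-!
After `n` steps every index below `n` is paired, and some paired index `m ≥ n` has a birth
below every unpaired birth: initially `ℓ_p`, and afterwards the birth most recently paired by
the `min_b` rule, or else the previous `m` (which cannot be the index `n` paired in step `n`).
For an unpaired `b_j` this `m` is the required `j₀`, since `m ≥ j` gives `d_m ≤_d d_j`.
-/

namespace GreedyRun

variable {p : ℕ} {β : Type} {leb : β → β → Prop} {b : Fin p → β} (run : GreedyRun p leb b)

theorem ell_eq_self_of_notMem {i : Fin p} (hi : (i : ℕ) < p - 1) (h : i ∉ run.S i) :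
    run.ell i = i := by
  have hstep := run.hstep i hi
  rw [if_neg h] at hstep
  exact hstep.1

theorem ell_notMem_of_mem {i : Fin p} (hi : (i : ℕ) < p - 1) (h : i ∈ run.S i) :
    run.ell i ∉ run.S i := by
  have hstep := run.hstep i hi
  rw [if_pos h] at hstep
  exact hstep.1

theorem leb_ell_of_mem {i : Fin p} (hi : (i : ℕ) < p - 1) (h : i ∈ run.S i) :
    ∀ k ∉ run.S i, leb (b (run.ell i)) (b k) := by
  have hstep := run.hstep i hi
  rw [if_pos h] at hstep
  exact hstep.2.1

theorem S_succ_eq_insert {i : Fin p} (hi : (i : ℕ) < p - 1) :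
    run.S (i + 1) = insert (run.ell i) (run.S i) := by
  have hstep := run.hstep i hi
  split_ifs at hstep with h
  · exact hstep.2.2
  · rw [run.ell_eq_self_of_notMem hi h]
    exact hstep.2

theorem mem_S_succ_self {i : Fin p} (hi : (i : ℕ) < p - 1) : i ∈ run.S (i + 1) := by
  rw [run.S_succ_eq_insert hi]
  by_cases h : i ∈ run.S i
  · exact Finset.mem_insert_of_mem h
  · rw [run.ell_eq_self_of_notMem hi h]
    exact Finset.mem_insert_self i _

theorem mem_S_of_lt {n : ℕ} (hn : n ≤ p - 1) {i : Fin p} (hi : (i : ℕ) < n) :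
    i ∈ run.S n := by
  induction n with
  | zero => omega
  | succ n ih =>
    set j : Fin p := ⟨n, by omega⟩
    have hj : (j : ℕ) < p - 1 := by simp only [j]; omega
    rcases Nat.lt_succ_iff_lt_or_eq.mp hi with hlt | heq
    · rw [run.S_succ_eq_insert hj]
      exact Finset.mem_insert_of_mem (ih (by omega) hlt)
    · rw [Fin.ext (b := j) heq]
      exact run.mem_S_succ_self hj

theorem exists_mem_S_ge_leb_notMem {n : ℕ} (hn : n ≤ p - 1) :
    ∃ m ∈ run.S n, n ≤ (m : ℕ) ∧ ∀ k ∉ run.S n, leb (b m) (b k) := by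
  induction n with
  | zero =>
    refine ⟨run.ell ⟨p - 1, by have := run.hp; omega⟩, ?_, Nat.zero_le _, fun k _ => run.hlast k⟩
    rw [run.hS0]
    exact Finset.mem_singleton_self _
  | succ n ih =>
    obtain ⟨m, hmS, hnm, hm⟩ := ih (by omega)
    set i : Fin p := ⟨n, by omega⟩
    have hi : (i : ℕ) < p - 1 := by simp only [i]; omega
    have hS_succ : run.S (n + 1) = insert (run.ell i) (run.S n) := run.S_succ_eq_insert hi
    have hnotMem_succ : ∀ k ∉ run.S (n + 1), k ∉ run.S n := fun k hk hkS =>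
      hk (hS_succ ▸ Finset.mem_insert_of_mem hkS)
    by_cases h : i ∈ run.S n
    · refine ⟨run.ell i, hS_succ ▸ Finset.mem_insert_self _ _, ?_,
        fun k hk => run.leb_ell_of_mem hi h k (hnotMem_succ k hk)⟩
      have hell := run.ell_notMem_of_mem hi h
      have hge : n ≤ (run.ell i : ℕ) := not_lt.mp fun hlt => hell (run.mem_S_of_lt (by omega) hlt)
      have hne : (run.ell i : ℕ) ≠ n := fun heq => hell (by rwa [Fin.ext (b := i) heq])
      omega
    · refine ⟨m, hS_succ ▸ Finset.mem_insert_of_mem hmS, ?_, fun k hk => hm k (hnotMem_succ k hk)⟩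
      have hne : (m : ℕ) ≠ n := fun heq => h (by rwa [Fin.ext (b := i) heq] at hmS)
      omega

end GreedyRun

/-- **Well-definedness of the greedy pairing choice.** In the greedy pairing algorithm,
with deaths sorted `d 0 ≥_d d 1 ≥_d ⋯ ≥_d d (p-1)`, at each step `j < p - 1`, if the
birth `b j` has not yet been paired then there exists an already-paired index `j₀` with
`b j₀ ≤_b b j` and `d j₀ ≤_d d j`. -/
theorem greedy_unpaired_exists_dominated (p : ℕ) (β δ : Type)
    [LinearOrder β] [LinearOrder δ]
    (b : Fin p → β) (d : Fin p → δ)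
    (hsorted : ∀ j k : Fin p, j ≤ k → d k ≤ d j)
    (run : GreedyRun p (· ≤ ·) b) :
    ∀ j : Fin p, (j : ℕ) < p - 1 → j ∉ run.S (j : ℕ) →
      ∃ j₀ ∈ run.S (j : ℕ), b j₀ ≤ b j ∧ d j₀ ≤ d j := by
  intro j hj hjS
  obtain ⟨m, hmS, hjm, hm⟩ := run.exists_mem_S_ge_leb_notMem hj.le
  exact ⟨m, hmS, hm j hjS, hsorted j m hjm⟩
end

section
/- In the greedy pairing algorithm for the reversed reflection diamond, at each iteration j, if b_j has already been paired when j is processed, then the birth b_{ℓ_j} chosen as the ≤_b-minimum unpaired birth satisfies b_{ℓ_j} ≥_b b_j. -/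
/-!
A birth `b m` that is paired before step `m` cannot have been paired as "itself" (that happens
only to `b s` at step `s`), so it entered as the `≤_b`-minimal unpaired birth of some earlier step.
Since the set of unpaired births only shrinks, `b m` stays below every birth that is still
unpaired. Applied at step `j` to `m = j` and the unpaired birth `ell j`, this gives the claim.
-/

namespace GreedyRun

variable {p : ℕ} {β : Type} {leb : β → β → Prop} {b : Fin p → β} (run : GreedyRun p leb b)

theorem S_subset_S_succ {t : ℕ} (ht : t < p - 1) : run.S t ⊆ run.S (t + 1) := by
  have hstep := run.hstep t ht
  split_ifs at hstep
  · exact hstep.2.2 ▸ Finset.subset_insert _ _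
  · exact hstep.2 ▸ Finset.subset_insert _ _

theorem mem_S_succ {t : ℕ} (ht : t < p - 1) {m : Fin p} (hm : m ∈ run.S (t + 1)) :
    m ∈ run.S t ∨ (m : ℕ) = t ∨ ∀ k ∉ run.S t, leb (b m) (b k) := by
  have hstep := run.hstep t ht
  split_ifs at hstep
  · obtain ⟨-, hmin, hS⟩ := hstep
    rcases Finset.mem_insert.mp (hS ▸ hm) with rfl | hm
    · exact Or.inr (Or.inr hmin)
    · exact Or.inl hm
  · rcases Finset.mem_insert.mp (hstep.2 ▸ hm) with rfl | hm
    · exact Or.inr (Or.inl rfl)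
    · exact Or.inl hm

theorem le_of_mem_S_of_notMem_S {t : ℕ} (ht : t ≤ p - 1) {m k : Fin p} (hm : m ∈ run.S t)
    (htm : t ≤ m) (hk : k ∉ run.S t) : leb (b m) (b k) := by
  induction t with
  | zero =>
    rw [run.hS0, Finset.mem_singleton] at hm
    exact hm ▸ run.hlast k
  | succ t ih =>
    have ht' : t < p - 1 := by omega
    have hk' : k ∉ run.S t := fun h => hk (run.S_subset_S_succ ht' h)
    rcases run.mem_S_succ ht' hm with hm | hmt | hmin
    · exact ih ht'.le hm (by omega) hk'
    · omega
    · exact hmin k hk'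

theorem ell_notMem_S {j : Fin p} (hj : (j : ℕ) < p - 1) (hjS : j ∈ run.S j) :
    run.ell j ∉ run.S j := by
  have hstep := run.hstep j hj
  simp only [Fin.eta, if_pos hjS] at hstep
  exact hstep.1

end GreedyRun

theorem greedy_paired_choice_ge_general (p : ℕ) (β : Type)
    [LinearOrder β]
    (b : Fin p → β)
    (run : GreedyRun p (· ≤ ·) b) :
    ∀ j : Fin p, (j : ℕ) < p - 1 → j ∈ run.S (j : ℕ) →
      b j ≤ b (run.ell j) :=
  fun _ hj hjS => run.le_of_mem_S_of_notMem_S hj.le hjS le_rfl (run.ell_notMem_S hj hjS)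

/-- **Monotonicity of the greedy choice.** In the greedy pairing algorithm, with deaths
sorted `d 0 ≥_d ⋯ ≥_d d (p-1)`, at each step `j < p - 1`, if the birth `b j` has already
been paired, then the `≤_b`-minimal unpaired birth `b (ell j)` chosen by the algorithm
satisfies `b (ell j) ≥_b b j`. -/
theorem greedy_paired_choice_ge (p : ℕ) (β δ : Type)
    [LinearOrder β] [LinearOrder δ]
    (b : Fin p → β) (d : Fin p → δ)
    (hsorted : ∀ j k : Fin p, j ≤ k → d k ≤ d j)
    (run : GreedyRun p (· ≤ ·) b) :
    ∀ j : Fin p, (j : ℕ) < p - 1 → j ∈ run.S (j : ℕ) →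
      b j ≤ b (run.ell j) :=
  greedy_paired_choice_ge_general p β b run
end

section
/- Let V be a representation of an A_n-type quiver such that every map f_i is either injective of corank 1 or surjective of nullity 1. Then in the interval decomposition of V: for every index i > 1 there is at most one interval summand with birth i, and for every index j < n there is at most one interval summand with death j. -/
variable {F : Type} [Field F] {n : ℕ} {orient : Fin n → Bool}

namespace LinearMap

variable {A B A' B' : Type*} [AddCommGroup A] [Module F A] [AddCommGroup B] [Module F B]
  [AddCommGroup A'] [Module F A'] [AddCommGroup B'] [Module F B']

/-- Surjective of nullity 1 is recorded, via rank–nullity, as a drop of dimension by one. -/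
def IsElementaryStep (f : A →ₗ[F] B) : Prop :=
  (Function.Injective f ∧ Module.finrank F B = Module.finrank F A + 1) ∨
    (Function.Surjective f ∧ Module.finrank F A = Module.finrank F B + 1)

theorem finrank_eq_finrank_add_one_of_surjective [FiniteDimensional F A] {f : A →ₗ[F] B}
    (hf : Function.Surjective f) (hker : Module.finrank F (ker f) = 1) :
    Module.finrank F A = Module.finrank F B + 1 := by
  rw [← f.finrank_range_add_finrank_ker, range_eq_top.mpr hf, finrank_top, hker]

theorem isElementaryStep_of_corank_one_or_nullity_one [FiniteDimensional F A] {f : A →ₗ[F] B}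
    (h : (Function.Injective f ∧ Module.finrank F B = Module.finrank F A + 1) ∨
      (Function.Surjective f ∧ Module.finrank F (ker f) = 1)) :
    f.IsElementaryStep :=
  h.imp_right fun ⟨hf, hker⟩ => ⟨hf, finrank_eq_finrank_add_one_of_surjective hf hker⟩

theorem IsElementaryStep.conj {f : A →ₗ[F] B} (hf : f.IsElementaryStep)
    (e₁ : A ≃ₗ[F] A') (e₂ : B ≃ₗ[F] B') {g : A' →ₗ[F] B'}
    (hcomm : ∀ x, e₂ (f x) = g (e₁ x)) : g.IsElementaryStep := by
  have hg : ⇑g = e₂ ∘ f ∘ e₁.symm := funext fun y => by simp [hcomm]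
  simp only [IsElementaryStep, hg, EquivLike.comp_injective, EquivLike.injective_comp,
    EquivLike.comp_surjective, EquivLike.surjective_comp, e₁.finrank_eq, e₂.finrank_eq] at hf ⊢
  exact hf

end LinearMap

theorem finrank_intervalSp (b d i : ℕ) :
    Module.finrank F (intervalSp F b d i) = if b ≤ i ∧ i ≤ d then 1 else 0 := by
  by_cases h : b ≤ i ∧ i ≤ d
  · rw [if_pos h, show intervalSp F b d i = ⊤ from if_pos h, finrank_top, Module.finrank_self]
  · rw [if_neg h, show intervalSp F b d i = ⊥ from if_neg h, finrank_bot]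

theorem mem_interval_of_injective {b d i j : ℕ}
    {f : intervalSp F b d i →ₗ[F] intervalSp F b d j} (hf : Function.Injective f)
    (hi : b ≤ i ∧ i ≤ d) : b ≤ j ∧ j ≤ d := by
  have := LinearMap.finrank_le_finrank_of_injective hf
  rw [finrank_intervalSp, finrank_intervalSp, if_pos hi] at this
  by_contra hj
  rw [if_neg hj] at this
  omega

theorem mem_interval_of_surjective {b d i j : ℕ}
    {f : intervalSp F b d i →ₗ[F] intervalSp F b d j} (hf : Function.Surjective f)
    (hj : b ≤ j ∧ j ≤ d) : b ≤ i ∧ i ≤ d := by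
  have := LinearMap.finrank_le_finrank_of_surjective hf
  rw [finrank_intervalSp, finrank_intervalSp, if_pos hj] at this
  by_contra hi
  rw [if_neg hi] at this
  omega

section IntervalSum

open Finset

theorem Finset.card_sdiff_le_one_of_subset_of_card_eq_add_one {α : Type*} [DecidableEq α]
    {s t : Finset α} (h : s ⊆ t) (hcard : #t = #s + 1) : #(s \ t) ≤ 1 ∧ #(t \ s) ≤ 1 := by
  rw [sdiff_eq_empty_iff_subset.mpr h, card_empty, card_sdiff_of_subset h]
  omega

variable {ι : Type*} [Fintype ι] (b d : ι → ℕ)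

def intervalsContaining (j : ℕ) : Finset ι :=
  univ.filter fun k => b k ≤ j ∧ j ≤ d k

theorem finrank_dfinsupp_intervalSp (j : ℕ) :
    Module.finrank F (Π₀ k, intervalSp F (b k) (d k) j) = #(intervalsContaining b d j) := by
  rw [(DFinsupp.linearEquivFunOnFintype (R := F)).finrank_eq, Module.finrank_pi_fintype,
    intervalsContaining, card_filter]
  exact sum_congr rfl fun k _ => finrank_intervalSp _ _ _

variable {b d}

theorem intervalsContaining_subset_of_injective {j j' : ℕ}
    {f : ∀ k, intervalSp F (b k) (d k) j →ₗ[F] intervalSp F (b k) (d k) j'}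
    (hf : Function.Injective (DFinsupp.mapRange.linearMap f)) :
    intervalsContaining b d j ⊆ intervalsContaining b d j' := by
  have hf := (DFinsupp.mapRange_injective (fun k => f k) fun k => map_zero (f k)).mp hf
  intro k
  simpa [intervalsContaining] using mem_interval_of_injective (hf k)

theorem intervalsContaining_subset_of_surjective {j j' : ℕ}
    {f : ∀ k, intervalSp F (b k) (d k) j →ₗ[F] intervalSp F (b k) (d k) j'}
    (hf : Function.Surjective (DFinsupp.mapRange.linearMap f)) :
    intervalsContaining b d j' ⊆ intervalsContaining b d j := by
  have hf := (DFinsupp.mapRange_surjective (fun k => f k) fun k => map_zero (f k)).mp hf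
  intro k
  simpa [intervalsContaining] using mem_interval_of_surjective (hf k)

variable [DecidableEq ι]

theorem card_sdiff_intervalsContaining_le_one {j j' : ℕ}
    {f : ∀ k, intervalSp F (b k) (d k) j →ₗ[F] intervalSp F (b k) (d k) j'}
    (hf : (DFinsupp.mapRange.linearMap f).IsElementaryStep) :
    #(intervalsContaining b d j \ intervalsContaining b d j') ≤ 1 ∧
      #(intervalsContaining b d j' \ intervalsContaining b d j) ≤ 1 := by
  simp only [LinearMap.IsElementaryStep, finrank_dfinsupp_intervalSp] at hf
  rcases hf with ⟨hinj, hcard⟩ | ⟨hsurj, hcard⟩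
  · exact card_sdiff_le_one_of_subset_of_card_eq_add_one
      (intervalsContaining_subset_of_injective hinj) hcard
  · exact (card_sdiff_le_one_of_subset_of_card_eq_add_one
      (intervalsContaining_subset_of_surjective hsurj) hcard).symm

theorem eq_of_birth_eq (hbd : ∀ k, b k ≤ d k) {i : ℕ}
    (h : #(intervalsContaining b d (i + 1) \ intervalsContaining b d i) ≤ 1) {k k' : ι}
    (hk : b k = i + 1) (hk' : b k' = i + 1) : k = k' := by
  refine card_le_one.mp h k ?_ k' ?_ <;>
  · simp only [intervalsContaining, mem_sdiff, mem_filter, mem_univ, true_and]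
    grind

theorem eq_of_death_eq (hbd : ∀ k, b k ≤ d k) {i : ℕ}
    (h : #(intervalsContaining b d i \ intervalsContaining b d (i + 1)) ≤ 1) {k k' : ι}
    (hk : d k = i) (hk' : d k' = i) : k = k' := by
  refine card_le_one.mp h k ?_ k' ?_ <;>
  · simp only [intervalsContaining, mem_sdiff, mem_filter, mem_univ, true_and]
    grind

end IntervalSum

/-- **Multiplicity-one property of zigzag persistence.** If every map of the
representation `M` is either injective of corank 1 or surjective of nullity 1, then in any
interval decomposition of `M` there is at most one interval born at each index `i > 0`
(the first index) and at most one interval dying at each index `j < n` (the last index).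
(Vertices are indexed `0,…,n`.) -/
theorem interval_decomposition_multiplicity_one (F : Type) [Field F] (n : ℕ)
    (orient : Fin n → Bool) (M : ZigzagRep F n orient)
    (hfd : ∀ i, FiniteDimensional F (M.V i))
    (hfwd : ∀ (i : Fin n) (h : orient i = true),
      (Function.Injective (M.fwd i h) ∧
        Module.finrank F (M.V i.succ) = Module.finrank F (M.V i.castSucc) + 1) ∨
      (Function.Surjective (M.fwd i h) ∧
        Module.finrank F (LinearMap.ker (M.fwd i h)) = 1))
    (hbwd : ∀ (i : Fin n) (h : orient i = false),
      (Function.Injective (M.bwd i h) ∧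
        Module.finrank F (M.V i.castSucc) = Module.finrank F (M.V i.succ) + 1) ∨
      (Function.Surjective (M.bwd i h) ∧
        Module.finrank F (LinearMap.ker (M.bwd i h)) = 1))
    (N : ℕ) (b d : Fin N → ℕ) (hbd : ∀ k, b k ≤ d k ∧ d k ≤ n)
    (iso : ZigzagRep.Iso M
      (ZigzagRep.dsum fun k : Fin N => intervalRep F n orient (b k) (d k))) :
    (∀ i : ℕ, 0 < i → ∀ k k' : Fin N, b k = i → b k' = i → k = k') ∧
    (∀ j : ℕ, j < n → ∀ k k' : Fin N, d k = j → d k' = j → k = k') := by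
  have step (i : Fin n) :
      (intervalsContaining b d i \ intervalsContaining b d (i + 1)).card ≤ 1 ∧
        (intervalsContaining b d (i + 1) \ intervalsContaining b d i).card ≤ 1 := by
    have := hfd i.castSucc
    have := hfd i.succ
    cases h : orient i
    · exact (card_sdiff_intervalsContaining_le_one
        ((LinearMap.isElementaryStep_of_corank_one_or_nullity_one (hbwd i h)).conj
          (iso.e i.succ) (iso.e i.castSucc) (iso.comm_bwd i h))).symm
    · exact card_sdiff_intervalsContaining_le_one
        ((LinearMap.isElementaryStep_of_corank_one_or_nullity_one (hfwd i h)).conj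
          (iso.e i.castSucc) (iso.e i.succ) (iso.comm_fwd i h))
  have hle k := (hbd k).1
  refine ⟨fun i hi k k' hk hk' => ?_, fun j hj k k' hk hk' => ?_⟩
  · obtain ⟨m, rfl⟩ := Nat.exists_eq_add_one_of_ne_zero hi.ne'
    have hm : m < n := by grind
    exact eq_of_birth_eq hle (step ⟨m, hm⟩).2 hk hk'
  · exact eq_of_death_eq hle (step ⟨j, hj⟩).1 hk hk'
end
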